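/- arXiv:1204.6695 — 3 statements merged into one kernel-verified Lean document; each statement's English description precedes it below -/
import Mathlib

section
/- Let L ←i₁− I −i₂→ R be a rewrite pattern and b a !-vertex of I. Then the span L' ←i₁'− I' −i₂'→ R' obtained by applying PCOPY_b is again a rewrite pattern. -/
/-- Vertex types: node-vertices, wire-vertices and `!`-vertices. -/
inductive VTy : Type
  | node | wire | bang
  deriving DecidableEq

/-- A directed graph whose vertices are typed by `VTy`. -/
structure TGraph (V E : Type) where
  s : E → V
  t : E → V
  ty : V → VTy

namespace TGraph

variable {V E : Type}

/-- No edge has both a node-vertex source and a node-vertex target. -/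
def NoNodeNode (G : TGraph V E) : Prop :=
  ∀ e, ¬ (G.ty (G.s e) = .node ∧ G.ty (G.t e) = .node)

/-- A `G₂`-typed graph: only node- and wire-vertices, no node-node edges. -/
def IsG2 (G : TGraph V E) : Prop :=
  G.NoNodeNode ∧ ∀ v, G.ty v ≠ .bang

/-- A `G₃`-typed graph: no node-node edges, and every edge into a `!`-vertex
comes from a `!`-vertex. -/
def IsG3 (G : TGraph V E) : Prop :=
  G.NoNodeNode ∧ ∀ e, G.ty (G.t e) = .bang → G.ty (G.s e) = .bang

/-- An input: a wire-vertex all of whose in-edges have `!`-vertex sources.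
In a `G₂`-typed graph this says exactly: a wire-vertex with no in-edges. -/
def IsInput (G : TGraph V E) (v : V) : Prop :=
  G.ty v = .wire ∧ ∀ e, G.t e = v → G.ty (G.s e) = .bang

/-- An output: a wire-vertex with no out-edges. -/
def IsOutput (G : TGraph V E) (v : V) : Prop :=
  G.ty v = .wire ∧ ∀ e, G.s e ≠ v

/-- A string graph: a `G₂`-typed graph where every wire-vertex has at most one
in-edge and at most one out-edge. -/
def IsStringGraph (G : TGraph V E) : Prop :=
  G.IsG2 ∧ ∀ v, G.ty v = .wire →
    (∀ e₁ e₂, G.t e₁ = v → G.t e₂ = v → e₁ = e₂) ∧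
    (∀ e₁ e₂, G.s e₁ = v → G.s e₂ = v → e₁ = e₂)

/-- The set of successors of a vertex. -/
def bsucc (G : TGraph V E) (b : V) : Set V := {v | ∃ e, G.s e = b ∧ G.t e = v}

/-- The set of predecessors of a vertex. -/
def bpred (G : TGraph V E) (b : V) : Set V := {v | ∃ e, G.s e = v ∧ G.t e = b}

/-- The full subgraph on a set of vertices, as a standalone graph. -/
def restrict (G : TGraph V E) (S : Set V) :
    TGraph {v : V // v ∈ S} {e : E // G.s e ∈ S ∧ G.t e ∈ S} where
  s e := ⟨G.s e.1, e.2.1⟩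
  t e := ⟨G.t e.1, e.2.2⟩
  ty v := G.ty v.1

/-- A subgraph of a graph. -/
structure Sub (G : TGraph V E) where
  verts : Set V
  edges : Set E
  s_mem : ∀ e ∈ edges, G.s e ∈ verts
  t_mem : ∀ e ∈ edges, G.t e ∈ verts

namespace Sub

variable {G : TGraph V E}

/-- The whole graph as a subgraph of itself. -/
def top (G : TGraph V E) : Sub G :=
  ⟨Set.univ, Set.univ, fun _ _ => trivial, fun _ _ => trivial⟩

def inter (A B : Sub G) : Sub G :=
  ⟨A.verts ∩ B.verts, A.edges ∩ B.edges,
    fun e he => ⟨A.s_mem e he.1, B.s_mem e he.2⟩,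
    fun e he => ⟨A.t_mem e he.1, B.t_mem e he.2⟩⟩

def union (A B : Sub G) : Sub G :=
  ⟨A.verts ∪ B.verts, A.edges ∪ B.edges,
    fun e he => he.elim (fun h => Or.inl (A.s_mem e h)) (fun h => Or.inr (B.s_mem e h)),
    fun e he => he.elim (fun h => Or.inl (A.t_mem e h)) (fun h => Or.inr (B.t_mem e h))⟩

/-- `H∖A` : the largest subgraph of `H` that is disjoint from `A`
(the full subgraph of `H` on the vertices of `H` not in `A`). -/
def minus (H A : Sub G) : Sub G :=
  ⟨H.verts \ A.verts, {e | e ∈ H.edges ∧ G.s e ∉ A.verts ∧ G.t e ∉ A.verts},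
    fun e he => ⟨H.s_mem e he.1, he.2.1⟩,
    fun e he => ⟨H.t_mem e he.1, he.2.2⟩⟩

/-- An input of a subgraph: a wire-vertex of the subgraph all of whose in-edges
(inside the subgraph) have `!`-vertex sources. -/
def IsInput (A : Sub G) (v : V) : Prop :=
  v ∈ A.verts ∧ G.ty v = .wire ∧ ∀ e ∈ A.edges, G.t e = v → G.ty (G.s e) = .bang

/-- An output of a subgraph: a wire-vertex of the subgraph with no out-edges
inside the subgraph. -/
def IsOutput (A : Sub G) (v : V) : Prop :=
  v ∈ A.verts ∧ G.ty v = .wire ∧ ∀ e ∈ A.edges, G.s e ≠ v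

/-- `A` is open in `H`: `In(H∖A) ⊆ In(H)` and `Out(H∖A) ⊆ Out(H)`. -/
def IsOpenIn (A H : Sub G) : Prop :=
  (∀ v, (H.minus A).IsInput v → H.IsInput v) ∧
  (∀ v, (H.minus A).IsOutput v → H.IsOutput v)

/-- `A` is an open subgraph of `G`. -/
def IsOpen (A : Sub G) : Prop := A.IsOpenIn (top G)

end Sub

/-- The full subgraph on a vertex set, as a subgraph. -/
def fullSub (G : TGraph V E) (S : Set V) : Sub G :=
  ⟨S, {e | G.s e ∈ S ∧ G.t e ∈ S}, fun _ he => he.1, fun _ he => he.2⟩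

/-- `B(b)` : the `!`-box of `b`, i.e. the full subgraph on the successors of `b`. -/
def bbox (G : TGraph V E) (b : V) : Sub G := G.fullSub (G.bsucc b)

/-- Edges of `Σ(G)`, the full subgraph on node- and wire-vertices. -/
def sigmaEdges (G : TGraph V E) : Set E :=
  {e | G.ty (G.s e) ≠ .bang ∧ G.ty (G.t e) ≠ .bang}

/-- Edges of `β(G)`, the full subgraph on `!`-vertices. -/
def betaEdges (G : TGraph V E) : Set E :=
  {e | G.ty (G.s e) = .bang ∧ G.ty (G.t e) = .bang}

/-- `Σ(G)` is a string graph. -/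
def SigmaIsStringGraph (G : TGraph V E) : Prop :=
  G.NoNodeNode ∧ ∀ v, G.ty v = .wire →
    (∀ e₁ e₂, e₁ ∈ G.sigmaEdges → e₂ ∈ G.sigmaEdges → G.t e₁ = v → G.t e₂ = v → e₁ = e₂) ∧
    (∀ e₁ e₂, e₁ ∈ G.sigmaEdges → e₂ ∈ G.sigmaEdges → G.s e₁ = v → G.s e₂ = v → e₁ = e₂)

/-- `β(G)` is posetal: simple and, as a relation on `!`-vertices, a partial order. -/
def BetaPosetal (G : TGraph V E) : Prop :=
  (∀ e₁ e₂, e₁ ∈ G.betaEdges → e₂ ∈ G.betaEdges →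
    G.s e₁ = G.s e₂ → G.t e₁ = G.t e₂ → e₁ = e₂) ∧
  (∀ b, G.ty b = .bang → b ∈ G.bsucc b) ∧
  (∀ b b', G.ty b = .bang → G.ty b' = .bang →
    b' ∈ G.bsucc b → b ∈ G.bsucc b' → b = b') ∧
  (∀ a b c, G.ty a = .bang → G.ty b = .bang → G.ty c = .bang →
    b ∈ G.bsucc a → c ∈ G.bsucc b → c ∈ G.bsucc a)

/-- A pattern graph. -/
def IsPattern (G : TGraph V E) : Prop :=
  G.IsG3 ∧ G.SigmaIsStringGraph ∧ G.BetaPosetal ∧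
  (∀ b, G.ty b = .bang → (G.bbox b).IsOpen) ∧
  (∀ b b', G.ty b = .bang → G.ty b' = .bang → b' ∈ G.bsucc b →
    G.bsucc b' ⊆ G.bsucc b)

end TGraph

namespace TGraph

variable {V E V' E' V'' E'' : Type}

/-- A morphism of typed graphs. -/
structure GHom (G : TGraph V E) (H : TGraph V' E') where
  fv : V → V'
  fe : E → E'
  map_s : ∀ e, H.s (fe e) = fv (G.s e)
  map_t : ∀ e, H.t (fe e) = fv (G.t e)
  map_ty : ∀ v, H.ty (fv v) = G.ty v

namespace GHom

variable {G : TGraph V E} {H : TGraph V' E'} {K : TGraph V'' E''}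

protected def id (G : TGraph V E) : GHom G G :=
  ⟨fun v => v, fun e => e, fun _ => rfl, fun _ => rfl, fun _ => rfl⟩

def comp (g : GHom H K) (f : GHom G H) : GHom G K where
  fv v := g.fv (f.fv v)
  fe e := g.fe (f.fe e)
  map_s e := by rw [g.map_s, f.map_s]
  map_t e := by rw [g.map_t, f.map_t]
  map_ty v := by rw [g.map_ty, f.map_ty]

theorem mem_bsucc (f : GHom G H) {b v : V} (h : v ∈ G.bsucc b) :
    f.fv v ∈ H.bsucc (f.fv b) := by
  obtain ⟨e, hs, ht⟩ := h
  exact ⟨f.fe e, by rw [f.map_s, hs], by rw [f.map_t, ht]⟩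

theorem mem_bpred (f : GHom G H) {b v : V} (h : v ∈ G.bpred b) :
    f.fv v ∈ H.bpred (f.fv b) := by
  obtain ⟨e, hs, ht⟩ := h
  exact ⟨f.fe e, by rw [f.map_s, hs], by rw [f.map_t, ht]⟩

end GHom

/-- An isomorphism of typed graphs. -/
structure GIso (G : TGraph V E) (H : TGraph V' E') where
  toHom : GHom G H
  fv_bij : Function.Bijective toHom.fv
  fe_bij : Function.Bijective toHom.fe

end TGraph

namespace TGraph

variable {V E : Type}

open Classical in
/-- The canonical map into the vertex set of `COPY_b(G)`: vertices of `B(b)`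
go to the second copy, all other vertices to the (shared) first copy. -/
noncomputable def embed (G : TGraph V E) (b v : V) : V ⊕ {w : V // w ∈ G.bsucc b} :=
  if h : v ∈ G.bsucc b then Sum.inr ⟨v, h⟩ else Sum.inl v

theorem embed_of_mem (G : TGraph V E) {b v : V} (h : v ∈ G.bsucc b) :
    G.embed b v = Sum.inr ⟨v, h⟩ := by
  simp [embed, h]

theorem embed_of_not_mem (G : TGraph V E) {b v : V} (h : v ∉ G.bsucc b) :
    G.embed b v = Sum.inl v := by
  simp [embed, h]

/-- `COPY_b(G)` : the pushout of the inclusion `G∖B(b) ↪ G` along itself,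
computed concretely: two copies of `G` glued along `G∖B(b)`. -/
noncomputable def copyGraph (G : TGraph V E) (b : V) :
    TGraph (V ⊕ {w : V // w ∈ G.bsucc b})
      (E ⊕ {e : E // G.s e ∈ G.bsucc b ∨ G.t e ∈ G.bsucc b}) where
  s := Sum.elim (fun e => Sum.inl (G.s e)) (fun e => G.embed b (G.s e.1))
  t := Sum.elim (fun e => Sum.inl (G.t e)) (fun e => G.embed b (G.t e.1))
  ty := Sum.elim G.ty fun v => G.ty v.1

/-- `DROP_b(G) = G∖{b}`. -/
def dropGraph (G : TGraph V E) (b : V) :=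
  G.restrict {v : V | v ≠ b}

/-- `KILL_b(G) = G∖B(b)`. -/
def killGraph (G : TGraph V E) (b : V) :=
  G.restrict {v : V | v ∉ G.bsucc b}

end TGraph

namespace TGraph

variable {V E : Type}

/-- The vertex identification performed by `MERGE_{b,b'}`: `b` and `b'` are
identified. -/
def mergeVRel (b b' : V) (v₁ v₂ : V) : Prop :=
  v₁ = v₂ ∨ (v₁ = b ∧ v₂ = b') ∨ (v₁ = b' ∧ v₂ = b)

/-- The edges of `B↑(b)`, the full subgraph on the predecessors of `b`. -/
def upEdges (G : TGraph V E) (b : V) : Set E :=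
  {e | G.s e ∈ G.bpred b ∧ G.t e ∈ G.bpred b}

/-- The edge identification performed by `MERGE_{b,b'}`: an edge of `B↑(b)` is
identified with the corresponding edge of `B↑(b')`. -/
def mergeERel (G : TGraph V E) (b b' : V) (e₁ e₂ : E) : Prop :=
  e₁ = e₂ ∨
    (e₁ ∈ G.upEdges b ∧ e₂ ∈ G.upEdges b' ∧
      Quot.mk (mergeVRel b b') (G.s e₁) = Quot.mk (mergeVRel b b') (G.s e₂) ∧
      Quot.mk (mergeVRel b b') (G.t e₁) = Quot.mk (mergeVRel b b') (G.t e₂)) ∨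
    (e₁ ∈ G.upEdges b' ∧ e₂ ∈ G.upEdges b ∧
      Quot.mk (mergeVRel b b') (G.s e₁) = Quot.mk (mergeVRel b b') (G.s e₂) ∧
      Quot.mk (mergeVRel b b') (G.t e₁) = Quot.mk (mergeVRel b b') (G.t e₂))

open Classical in
/-- `MERGE_{b,b'}(G)` : the coequaliser of the inclusion `B↑(b) ↪ G` and the
composite of the canonical isomorphism `B↑(b) ≅ B↑(b')` with `B↑(b') ↪ G`,
computed concretely as a quotient of `G`. -/
noncomputable def mergeGraph (G : TGraph V E) (b b' : V) :
    TGraph (Quot (mergeVRel b b')) (Quot (G.mergeERel b b')) where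
  s := Quot.lift (fun e => Quot.mk _ (G.s e)) (by
    intro e₁ e₂ h
    rcases h with h | h | h
    · rw [h]
    · exact h.2.2.1
    · exact h.2.2.1)
  t := Quot.lift (fun e => Quot.mk _ (G.t e)) (by
    intro e₁ e₂ h
    rcases h with h | h | h
    · rw [h]
    · exact h.2.2.2
    · exact h.2.2.2)
  ty := Quot.lift (fun v => if v = b' then G.ty b else G.ty v) (by
    intro v₁ v₂ h
    rcases h with h | ⟨h1, h2⟩ | ⟨h1, h2⟩
    · rw [h]
    · subst h1; subst h2; simp
    · subst h1; subst h2; simp)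

open Classical in
theorem mergeGraph_ty_mk (G : TGraph V E) (b b' v : V) :
    (G.mergeGraph b b').ty (Quot.mk _ v) = if v = b' then G.ty b else G.ty v := rfl

end TGraph

namespace TGraph

variable {VL EL VI EI VR ER : Type}

theorem mem_of_preimage_eq {α β : Type _} (f : α → β) {S : Set β} {T : Set α}
    (h : f ⁻¹' S = T) {x : α} (hx : f x ∈ S) : x ∈ T := by
  rw [← h]; exact hx

/-- A rewrite pattern: a span of pattern-graph morphisms `L ← I → R` such that
`Σ(I)` is a point graph, `L` and `R` share the same boundary via `i₁`, `i₂`,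
`β(i₁)` and `β(i₂)` are isomorphisms onto `β(L)`, `β(R)`, and `!`-boxes are
reflected exactly. -/
structure IsRewritePattern (L : TGraph VL EL) (I : TGraph VI EI) (R : TGraph VR ER)
    (i₁ : GHom I L) (i₂ : GHom I R) : Prop where
  patL : L.IsPattern
  patI : I.IsPattern
  patR : R.IsPattern
  /-- `Σ(I)` is a point graph: no node-vertices ... -/
  no_node : ∀ v, I.ty v ≠ .node
  /-- ... and no edges between non-`!`-vertices. -/
  no_sigma_edges : ∀ e : EI, e ∉ I.sigmaEdges
  /-- `i₁` restricts to a bijection from the wire-vertices of `I` onto the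
  boundary of `L`. -/
  bound_bij₁ : Set.BijOn i₁.fv {v | I.ty v = .wire} {v | L.IsInput v ∨ L.IsOutput v}
  bound_bij₂ : Set.BijOn i₂.fv {v | I.ty v = .wire} {v | R.IsInput v ∨ R.IsOutput v}
  /-- inputs correspond to inputs and outputs to outputs. -/
  inout : ∀ v, I.ty v = .wire →
    ((L.IsInput (i₁.fv v) ↔ R.IsInput (i₂.fv v)) ∧
     (L.IsOutput (i₁.fv v) ↔ R.IsOutput (i₂.fv v)))
  beta_bijV₁ : Set.BijOn i₁.fv {v | I.ty v = .bang} {v | L.ty v = .bang}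
  beta_bijE₁ : Set.BijOn i₁.fe I.betaEdges L.betaEdges
  beta_bijV₂ : Set.BijOn i₂.fv {v | I.ty v = .bang} {v | R.ty v = .bang}
  beta_bijE₂ : Set.BijOn i₂.fe I.betaEdges R.betaEdges
  /-- the preimage of `B(i₁(b))` under `i₁` is exactly `B(b)`. -/
  box₁ : ∀ b, I.ty b = .bang → i₁.fv ⁻¹' (L.bsucc (i₁.fv b)) = I.bsucc b
  box₂ : ∀ b, I.ty b = .bang → i₂.fv ⁻¹' (R.bsucc (i₂.fv b)) = I.bsucc b

namespace IsRewritePattern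

variable {L : TGraph VL EL} {I : TGraph VI EI} {R : TGraph VR ER}
  {i₁ : GHom I L} {i₂ : GHom I R}

theorem inj₁ (h : IsRewritePattern L I R i₁ i₂) {b : VI}
    (hb : I.ty b = .bang) : ∀ v, i₁.fv v = i₁.fv b → v = b := by
  intro v hv
  have htv : I.ty v = .bang := by
    rw [← i₁.map_ty v, hv, i₁.map_ty, hb]
  exact h.beta_bijV₁.injOn htv hb hv

theorem inj₂ (h : IsRewritePattern L I R i₁ i₂) {b : VI}
    (hb : I.ty b = .bang) : ∀ v, i₂.fv v = i₂.fv b → v = b := by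
  intro v hv
  have htv : I.ty v = .bang := by
    rw [← i₂.map_ty v, hv, i₂.map_ty, hb]
  exact h.beta_bijV₂.injOn htv hb hv

theorem ne₁ (h : IsRewritePattern L I R i₁ i₂) {b : VI}
    (hb : I.ty b = .bang) : ∀ v, v ≠ b → i₁.fv v ≠ i₁.fv b :=
  fun v hv hc => hv (h.inj₁ hb v hc)

theorem ne₂ (h : IsRewritePattern L I R i₁ i₂) {b : VI}
    (hb : I.ty b = .bang) : ∀ v, v ≠ b → i₂.fv v ≠ i₂.fv b :=
  fun v hv hc => hv (h.inj₂ hb v hc)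

end IsRewritePattern

/-- The morphism `COPY_b(I) → COPY_{f(b)}(L)` induced between the pushouts by
a morphism `f : I → L` reflecting the `!`-box of `b` exactly. -/
noncomputable def copyHom {I : TGraph VI EI} {L : TGraph VL EL}
    (f : GHom I L) (b : VI)
    (hbox : f.fv ⁻¹' (L.bsucc (f.fv b)) = I.bsucc b) :
    GHom (I.copyGraph b) (L.copyGraph (f.fv b)) where
  fv := Sum.elim (fun v => Sum.inl (f.fv v))
    (fun v => Sum.inr ⟨f.fv v.1, f.mem_bsucc v.2⟩)
  fe := Sum.elim (fun e => Sum.inl (f.fe e))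
    (fun e => Sum.inr ⟨f.fe e.1, by
      rcases e.2 with h | h
      · exact Or.inl (by rw [f.map_s]; exact f.mem_bsucc h)
      · exact Or.inr (by rw [f.map_t]; exact f.mem_bsucc h)⟩)
  map_s := by
    rintro (e | e)
    · show Sum.inl (L.s (f.fe e)) = Sum.inl (f.fv (I.s e))
      rw [f.map_s]
    · show L.embed (f.fv b) (L.s (f.fe e.1)) =
        Sum.elim (fun v => Sum.inl (f.fv v))
          (fun v => Sum.inr ⟨f.fv v.1, f.mem_bsucc v.2⟩) (I.embed b (I.s e.1))
      rw [f.map_s]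
      by_cases h : I.s e.1 ∈ I.bsucc b
      · rw [I.embed_of_mem h, L.embed_of_mem (f.mem_bsucc h)]
        rfl
      · have h' : f.fv (I.s e.1) ∉ L.bsucc (f.fv b) :=
          fun hc => h (mem_of_preimage_eq f.fv hbox hc)
        rw [I.embed_of_not_mem h, L.embed_of_not_mem h']
        rfl
  map_t := by
    rintro (e | e)
    · show Sum.inl (L.t (f.fe e)) = Sum.inl (f.fv (I.t e))
      rw [f.map_t]
    · show L.embed (f.fv b) (L.t (f.fe e.1)) =
        Sum.elim (fun v => Sum.inl (f.fv v))
          (fun v => Sum.inr ⟨f.fv v.1, f.mem_bsucc v.2⟩) (I.embed b (I.t e.1))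
      rw [f.map_t]
      by_cases h : I.t e.1 ∈ I.bsucc b
      · rw [I.embed_of_mem h, L.embed_of_mem (f.mem_bsucc h)]
        rfl
      · have h' : f.fv (I.t e.1) ∉ L.bsucc (f.fv b) :=
          fun hc => h (mem_of_preimage_eq f.fv hbox hc)
        rw [I.embed_of_not_mem h, L.embed_of_not_mem h']
        rfl
  map_ty := by
    rintro (v | v)
    · exact f.map_ty v
    · exact f.map_ty v.1

/-- The morphism `KILL_b(I) → KILL_{f(b)}(L)` obtained by restricting `f`. -/
def killHom {I : TGraph VI EI} {L : TGraph VL EL}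
    (f : GHom I L) (b : VI)
    (hbox : f.fv ⁻¹' (L.bsucc (f.fv b)) = I.bsucc b) :
    GHom (I.killGraph b) (L.killGraph (f.fv b)) where
  fv v := ⟨f.fv v.1, fun hc => v.2 (mem_of_preimage_eq f.fv hbox hc)⟩
  fe e := ⟨f.fe e.1, by
    refine ⟨?_, ?_⟩
    · show L.s (f.fe e.1) ∉ L.bsucc (f.fv b)
      rw [f.map_s]
      exact fun hc => e.2.1 (mem_of_preimage_eq f.fv hbox hc)
    · show L.t (f.fe e.1) ∉ L.bsucc (f.fv b)
      rw [f.map_t]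
      exact fun hc => e.2.2 (mem_of_preimage_eq f.fv hbox hc)⟩
  map_s e := Subtype.ext (f.map_s e.1)
  map_t e := Subtype.ext (f.map_t e.1)
  map_ty v := f.map_ty v.1

/-- The morphism `DROP_b(I) → DROP_{f(b)}(L)` obtained by restricting `f`. -/
def dropHom {I : TGraph VI EI} {L : TGraph VL EL}
    (f : GHom I L) (b : VI)
    (hne : ∀ v, v ≠ b → f.fv v ≠ f.fv b) :
    GHom (I.dropGraph b) (L.dropGraph (f.fv b)) where
  fv v := ⟨f.fv v.1, hne v.1 v.2⟩
  fe e := ⟨f.fe e.1, by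
    refine ⟨?_, ?_⟩
    · show L.s (f.fe e.1) ≠ f.fv b
      rw [f.map_s]
      exact hne _ e.2.1
    · show L.t (f.fe e.1) ≠ f.fv b
      rw [f.map_t]
      exact hne _ e.2.2⟩
  map_s e := Subtype.ext (f.map_s e.1)
  map_t e := Subtype.ext (f.map_t e.1)
  map_ty v := f.map_ty v.1

/-- The vertex component of the induced morphism between merges. -/
def mergeVMap {I : TGraph VI EI} {L : TGraph VL EL}
    (f : GHom I L) (b b' : VI) :
    Quot (mergeVRel b b') → Quot (mergeVRel (f.fv b) (f.fv b')) :=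
  Quot.lift (fun v => Quot.mk _ (f.fv v)) (by
    intro v₁ v₂ h
    rcases h with h | ⟨h1, h2⟩ | ⟨h1, h2⟩
    · rw [h]
    · subst h1; subst h2; exact Quot.sound (Or.inr (Or.inl ⟨rfl, rfl⟩))
    · subst h1; subst h2; exact Quot.sound (Or.inr (Or.inr ⟨rfl, rfl⟩)))

theorem mergeVMap_mk {I : TGraph VI EI} {L : TGraph VL EL}
    (f : GHom I L) (b b' : VI) (v : VI) :
    mergeVMap f b b' (Quot.mk _ v) = Quot.mk _ (f.fv v) := rfl

theorem mergeGraph_s_mk {V E : Type} (G : TGraph V E) (b b' : V) (e : E) :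
    (G.mergeGraph b b').s (Quot.mk _ e) = Quot.mk _ (G.s e) := rfl

theorem mergeGraph_t_mk {V E : Type} (G : TGraph V E) (b b' : V) (e : E) :
    (G.mergeGraph b b').t (Quot.mk _ e) = Quot.mk _ (G.t e) := rfl

/-- The edge component of the induced morphism between merges. -/
def mergeEMap {I : TGraph VI EI} {L : TGraph VL EL}
    (f : GHom I L) (b b' : VI) :
    Quot (I.mergeERel b b') → Quot (L.mergeERel (f.fv b) (f.fv b')) :=
  Quot.lift (fun e => Quot.mk _ (f.fe e)) (by
    intro e₁ e₂ h
    rcases h with h | ⟨h1, h2, h3, h4⟩ | ⟨h1, h2, h3, h4⟩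
    · rw [h]
    · refine Quot.sound (Or.inr (Or.inl ⟨⟨?_, ?_⟩, ⟨?_, ?_⟩, ?_, ?_⟩))
      · rw [f.map_s]; exact f.mem_bpred h1.1
      · rw [f.map_t]; exact f.mem_bpred h1.2
      · rw [f.map_s]; exact f.mem_bpred h2.1
      · rw [f.map_t]; exact f.mem_bpred h2.2
      · have h3' := congrArg (mergeVMap f b b') h3
        rw [mergeVMap_mk, mergeVMap_mk] at h3'
        rw [f.map_s, f.map_s]; exact h3'
      · have h4' := congrArg (mergeVMap f b b') h4
        rw [mergeVMap_mk, mergeVMap_mk] at h4'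
        rw [f.map_t, f.map_t]; exact h4'
    · refine Quot.sound (Or.inr (Or.inr ⟨⟨?_, ?_⟩, ⟨?_, ?_⟩, ?_, ?_⟩))
      · rw [f.map_s]; exact f.mem_bpred h1.1
      · rw [f.map_t]; exact f.mem_bpred h1.2
      · rw [f.map_s]; exact f.mem_bpred h2.1
      · rw [f.map_t]; exact f.mem_bpred h2.2
      · have h3' := congrArg (mergeVMap f b b') h3
        rw [mergeVMap_mk, mergeVMap_mk] at h3'
        rw [f.map_s, f.map_s]; exact h3'
      · have h4' := congrArg (mergeVMap f b b') h4
        rw [mergeVMap_mk, mergeVMap_mk] at h4'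
        rw [f.map_t, f.map_t]; exact h4')

theorem mergeEMap_mk {I : TGraph VI EI} {L : TGraph VL EL}
    (f : GHom I L) (b b' : VI) (e : EI) :
    mergeEMap f b b' (Quot.mk _ e) = Quot.mk _ (f.fe e) := rfl

/-- The morphism `MERGE_{b,b'}(I) → MERGE_{f(b),f(b')}(L)` induced between the
coequalisers by a morphism `f : I → L`. -/
noncomputable def mergeHom {I : TGraph VI EI} {L : TGraph VL EL}
    (f : GHom I L) (b b' : VI)
    (hinj : ∀ v, f.fv v = f.fv b' → v = b') :
    GHom (I.mergeGraph b b') (L.mergeGraph (f.fv b) (f.fv b')) where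
  fv := mergeVMap f b b'
  fe := mergeEMap f b b'
  map_s := by
    refine Quot.ind ?_
    intro e
    rw [mergeEMap_mk, mergeGraph_s_mk, mergeGraph_s_mk, mergeVMap_mk, f.map_s]
  map_t := by
    refine Quot.ind ?_
    intro e
    rw [mergeEMap_mk, mergeGraph_t_mk, mergeGraph_t_mk, mergeVMap_mk, f.map_t]
  map_ty := by
    refine Quot.ind ?_
    intro v
    change (L.mergeGraph (f.fv b) (f.fv b')).ty (Quot.mk _ (f.fv v)) =
      (I.mergeGraph b b').ty (Quot.mk _ v)
    rw [mergeGraph_ty_mk, mergeGraph_ty_mk]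
    split_ifs with h1 h2 h2
    · exact f.map_ty b
    · exact absurd (hinj v h1) h2
    · exact absurd (congrArg f.fv h2) h1
    · exact f.map_ty v

end TGraph

namespace TGraph

variable {V E : Type}

theorem embed_eq_inl (G : TGraph V E) {b v x : V} :
    G.embed b v = Sum.inl x ↔ v = x ∧ v ∉ G.bsucc b := by
  constructor
  · intro h
    by_cases hv : v ∈ G.bsucc b
    · rw [G.embed_of_mem hv] at h; simp at h
    · rw [G.embed_of_not_mem hv] at h; exact ⟨Sum.inl.inj h, hv⟩
  · rintro ⟨rfl, hv⟩; exact G.embed_of_not_mem hv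

theorem embed_eq_inr (G : TGraph V E) {b v : V} {y : {w // w ∈ G.bsucc b}} :
    G.embed b v = Sum.inr y ↔ v = y.1 := by
  constructor
  · intro h
    by_cases hv : v ∈ G.bsucc b
    · rw [G.embed_of_mem hv] at h
      exact congrArg Subtype.val (Sum.inr.inj h)
    · rw [G.embed_of_not_mem hv] at h; simp at h
  · rintro rfl; exact G.embed_of_mem y.2

theorem embed_inj (G : TGraph V E) {b v w : V} (h : G.embed b v = G.embed b w) : v = w := by
  by_cases hv : v ∈ G.bsucc b <;> by_cases hw : w ∈ G.bsucc b
  · rw [G.embed_of_mem hv, G.embed_of_mem hw] at h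
    exact congrArg Subtype.val (Sum.inr.inj h)
  · rw [G.embed_of_mem hv, G.embed_of_not_mem hw] at h; simp at h
  · rw [G.embed_of_not_mem hv, G.embed_of_mem hw] at h; simp at h
  · rw [G.embed_of_not_mem hv, G.embed_of_not_mem hw] at h; exact Sum.inl.inj h

theorem copy_ty_inl (G : TGraph V E) (b v : V) :
    (G.copyGraph b).ty (Sum.inl v) = G.ty v := rfl

theorem copy_ty_inr (G : TGraph V E) (b : V) (v : {w // w ∈ G.bsucc b}) :
    (G.copyGraph b).ty (Sum.inr v) = G.ty v.1 := rfl

theorem copy_ty_embed (G : TGraph V E) (b v : V) :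
    (G.copyGraph b).ty (G.embed b v) = G.ty v := by
  by_cases hv : v ∈ G.bsucc b
  · rw [G.embed_of_mem hv]; rfl
  · rw [G.embed_of_not_mem hv]; rfl

theorem copy_s_inl (G : TGraph V E) (b : V) (e : E) :
    (G.copyGraph b).s (Sum.inl e) = Sum.inl (G.s e) := rfl

theorem copy_t_inl (G : TGraph V E) (b : V) (e : E) :
    (G.copyGraph b).t (Sum.inl e) = Sum.inl (G.t e) := rfl

theorem copy_s_inr (G : TGraph V E) (b : V)
    (e : {e : E // G.s e ∈ G.bsucc b ∨ G.t e ∈ G.bsucc b}) :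
    (G.copyGraph b).s (Sum.inr e) = G.embed b (G.s e.1) := rfl

theorem copy_t_inr (G : TGraph V E) (b : V)
    (e : {e : E // G.s e ∈ G.bsucc b ∨ G.t e ∈ G.bsucc b}) :
    (G.copyGraph b).t (Sum.inr e) = G.embed b (G.t e.1) := rfl

theorem copy_succ_inl_inl (G : TGraph V E) (b : V) {x y : V} :
    Sum.inl y ∈ (G.copyGraph b).bsucc (Sum.inl x) ↔ y ∈ G.bsucc x := by
  constructor
  · rintro ⟨(e | e), hs, ht⟩
    · exact ⟨e, Sum.inl.inj hs, Sum.inl.inj ht⟩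
    · rw [copy_s_inr] at hs
      rw [copy_t_inr] at ht
      obtain ⟨-, hs2⟩ := G.embed_eq_inl.mp hs
      obtain ⟨-, ht2⟩ := G.embed_eq_inl.mp ht
      exact absurd e.2 (by simp [hs2, ht2])
  · rintro ⟨e, hs, ht⟩
    exact ⟨Sum.inl e, by rw [copy_s_inl, hs], by rw [copy_t_inl, ht]⟩

theorem copy_succ_inl_inr (G : TGraph V E) (b : V) {x : V} {y : {w // w ∈ G.bsucc b}} :
    Sum.inr y ∈ (G.copyGraph b).bsucc (Sum.inl x) ↔ y.1 ∈ G.bsucc x ∧ x ∉ G.bsucc b := by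
  constructor
  · rintro ⟨(e | e), hs, ht⟩
    · rw [copy_t_inl] at ht; simp at ht
    · rw [copy_s_inr] at hs
      rw [copy_t_inr] at ht
      obtain ⟨h1, h2⟩ := G.embed_eq_inl.mp hs
      have h3 := G.embed_eq_inr.mp ht
      exact ⟨⟨e.1, h1, h3⟩, h1 ▸ h2⟩
  · rintro ⟨⟨e, hs, ht⟩, hx⟩
    refine ⟨Sum.inr ⟨e, Or.inr (by rw [ht]; exact y.2)⟩, ?_, ?_⟩
    · rw [copy_s_inr]
      exact G.embed_eq_inl.mpr ⟨hs, by rw [hs]; exact hx⟩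
    · rw [copy_t_inr]
      exact G.embed_eq_inr.mpr ht

theorem copy_succ_inr_inl (G : TGraph V E) (b : V) {x : {w // w ∈ G.bsucc b}} {y : V} :
    Sum.inl y ∈ (G.copyGraph b).bsucc (Sum.inr x) ↔ y ∈ G.bsucc x.1 ∧ y ∉ G.bsucc b := by
  constructor
  · rintro ⟨(e | e), hs, ht⟩
    · rw [copy_s_inl] at hs; simp at hs
    · rw [copy_s_inr] at hs
      rw [copy_t_inr] at ht
      have h1 := G.embed_eq_inr.mp hs
      obtain ⟨h2, h3⟩ := G.embed_eq_inl.mp ht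
      exact ⟨⟨e.1, h1, h2⟩, h2 ▸ h3⟩
  · rintro ⟨⟨e, hs, ht⟩, hy⟩
    refine ⟨Sum.inr ⟨e, Or.inl (by rw [hs]; exact x.2)⟩, ?_, ?_⟩
    · rw [copy_s_inr]
      exact G.embed_eq_inr.mpr hs
    · rw [copy_t_inr]
      exact G.embed_eq_inl.mpr ⟨ht, by rw [ht]; exact hy⟩

theorem copy_succ_inr_inr (G : TGraph V E) (b : V)
    {x y : {w // w ∈ G.bsucc b}} :
    Sum.inr y ∈ (G.copyGraph b).bsucc (Sum.inr x) ↔ y.1 ∈ G.bsucc x.1 := by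
  constructor
  · rintro ⟨(e | e), hs, ht⟩
    · rw [copy_s_inl] at hs; simp at hs
    · rw [copy_s_inr] at hs
      rw [copy_t_inr] at ht
      exact ⟨e.1, G.embed_eq_inr.mp hs, G.embed_eq_inr.mp ht⟩
  · rintro ⟨e, hs, ht⟩
    refine ⟨Sum.inr ⟨e, Or.inl (by rw [hs]; exact x.2)⟩, ?_, ?_⟩
    · rw [copy_s_inr]; exact G.embed_eq_inr.mpr hs
    · rw [copy_t_inr]; exact G.embed_eq_inr.mpr ht

theorem copy_sigma_inl (G : TGraph V E) (b : V) (e : E) :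
    Sum.inl e ∈ (G.copyGraph b).sigmaEdges ↔ e ∈ G.sigmaEdges := Iff.rfl

theorem copy_sigma_inr (G : TGraph V E) (b : V)
    (e : {e : E // G.s e ∈ G.bsucc b ∨ G.t e ∈ G.bsucc b}) :
    Sum.inr e ∈ (G.copyGraph b).sigmaEdges ↔ e.1 ∈ G.sigmaEdges := by
  simp only [sigmaEdges, Set.mem_setOf_eq, copy_s_inr, copy_t_inr, copy_ty_embed]

theorem copy_beta_inl (G : TGraph V E) (b : V) (e : E) :
    Sum.inl e ∈ (G.copyGraph b).betaEdges ↔ e ∈ G.betaEdges := Iff.rfl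

theorem copy_beta_inr (G : TGraph V E) (b : V)
    (e : {e : E // G.s e ∈ G.bsucc b ∨ G.t e ∈ G.bsucc b}) :
    Sum.inr e ∈ (G.copyGraph b).betaEdges ↔ e.1 ∈ G.betaEdges := by
  simp only [betaEdges, Set.mem_setOf_eq, copy_s_inr, copy_t_inr, copy_ty_embed]

theorem copy_input_inl (G : TGraph V E) (b : V) (w : V) :
    (G.copyGraph b).IsInput (Sum.inl w) ↔ G.IsInput w := by
  constructor
  · rintro ⟨hw, hin⟩
    exact ⟨hw, fun e ht => hin (Sum.inl e) (congrArg Sum.inl ht)⟩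
  · rintro ⟨hw, hin⟩
    refine ⟨hw, ?_⟩
    rintro (e | e) ht
    · exact hin e (Sum.inl.inj ht)
    · rw [copy_t_inr] at ht
      rw [copy_s_inr, copy_ty_embed]
      exact hin e.1 (G.embed_eq_inl.mp ht).1

theorem copy_input_inr (G : TGraph V E) (b : V) (w : {u // u ∈ G.bsucc b}) :
    (G.copyGraph b).IsInput (Sum.inr w) ↔ G.IsInput w.1 := by
  constructor
  · rintro ⟨hw, hin⟩
    refine ⟨hw, fun e ht => ?_⟩
    have := hin (Sum.inr ⟨e, Or.inr (by rw [ht]; exact w.2)⟩)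
      (by rw [copy_t_inr]; exact G.embed_eq_inr.mpr ht)
    rwa [copy_s_inr, copy_ty_embed] at this
  · rintro ⟨hw, hin⟩
    refine ⟨hw, ?_⟩
    rintro (e | e) ht
    · rw [copy_t_inl] at ht; simp at ht
    · rw [copy_t_inr] at ht
      rw [copy_s_inr, copy_ty_embed]
      exact hin e.1 (G.embed_eq_inr.mp ht)

theorem copy_output_inl (G : TGraph V E) (b : V) (w : V) :
    (G.copyGraph b).IsOutput (Sum.inl w) ↔ G.IsOutput w := by
  constructor
  · rintro ⟨hw, hout⟩
    exact ⟨hw, fun e hs => hout (Sum.inl e) (by rw [copy_s_inl, hs])⟩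
  · rintro ⟨hw, hout⟩
    refine ⟨hw, ?_⟩
    rintro (e | e) hs
    · exact hout e (Sum.inl.inj hs)
    · rw [copy_s_inr] at hs
      exact hout e.1 (G.embed_eq_inl.mp hs).1

theorem copy_output_inr (G : TGraph V E) (b : V) (w : {u // u ∈ G.bsucc b}) :
    (G.copyGraph b).IsOutput (Sum.inr w) ↔ G.IsOutput w.1 := by
  constructor
  · rintro ⟨hw, hout⟩
    refine ⟨hw, fun e hs => ?_⟩
    exact hout (Sum.inr ⟨e, Or.inl (by rw [hs]; exact w.2)⟩)
      (by rw [copy_s_inr]; exact G.embed_eq_inr.mpr hs)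
  · rintro ⟨hw, hout⟩
    refine ⟨hw, ?_⟩
    rintro (e | e) hs
    · rw [copy_s_inl] at hs; simp at hs
    · rw [copy_s_inr] at hs
      exact hout e.1 (G.embed_eq_inr.mp hs)

theorem top_input_of (G : TGraph V E) {v : V} (h : G.IsInput v) : (Sub.top G).IsInput v :=
  ⟨trivial, h.1, fun e _ ht => h.2 e ht⟩

theorem top_output_of (G : TGraph V E) {v : V} (h : G.IsOutput v) : (Sub.top G).IsOutput v :=
  ⟨trivial, h.1, fun e _ hs => h.2 e hs⟩

theorem input_of_top (G : TGraph V E) {v : V} (h : (Sub.top G).IsInput v) : G.IsInput v :=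
  ⟨h.2.1, fun e ht => h.2.2 e trivial ht⟩

theorem output_of_top (G : TGraph V E) {v : V} (h : (Sub.top G).IsOutput v) : G.IsOutput v :=
  ⟨h.2.1, fun e hs => h.2.2 e trivial hs⟩

end TGraph

namespace TGraph

variable {V E : Type}

theorem no_sigma_exit (G : TGraph V E) {b : V} (hG : G.IsPattern) (hb : G.ty b = .bang)
    {e : E} (he : e ∈ G.sigmaEdges) (hs : G.s e ∈ G.bsucc b)
    (ht : G.ty (G.t e) = .wire) : G.t e ∈ G.bsucc b := by
  by_contra hw
  have hin : ((Sub.top G).minus (G.bbox b)).IsInput (G.t e) := by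
    refine ⟨⟨trivial, hw⟩, ht, ?_⟩
    rintro e' ⟨-, hs', ht'⟩ hte
    by_contra hbang
    have he'σ : e' ∈ G.sigmaEdges := ⟨hbang, by rw [hte, ht]; simp⟩
    have heq := (hG.2.1.2 (G.t e) ht).1 e' e he'σ he hte rfl
    subst heq
    exact hs' hs
  have htop := (hG.2.2.2.1 b hb).1 (G.t e) hin
  exact he.1 (htop.2.2 e trivial rfl)

theorem no_sigma_enter (G : TGraph V E) {b : V} (hG : G.IsPattern) (hb : G.ty b = .bang)
    {e : E} (ht : G.t e ∈ G.bsucc b) (hs : G.ty (G.s e) = .wire)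
    (hsn : G.s e ∉ G.bsucc b) : False := by
  have heσ : e ∈ G.sigmaEdges := by
    refine ⟨by rw [hs]; simp, fun hbb => ?_⟩
    have := hG.1.2 e hbb
    rw [hs] at this
    simp at this
  have hout : ((Sub.top G).minus (G.bbox b)).IsOutput (G.s e) := by
    refine ⟨⟨trivial, hsn⟩, hs, ?_⟩
    rintro e' ⟨-, hs', ht'⟩ hse
    have he'σ : e' ∈ G.sigmaEdges := by
      refine ⟨by rw [hse, hs]; simp, fun hbb => ?_⟩
      have := hG.1.2 e' hbb
      rw [hse, hs] at this
      simp at this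
    have heq := (hG.2.1.2 (G.s e) hs).2 e' e he'σ heσ hse rfl
    subst heq
    exact ht' ht
  have htop := (hG.2.2.2.1 b hb).2 (G.s e) hout
  exact htop.2.2 e trivial rfl

/-- An `inr` edge of the copy cannot be a sigma in-edge of a shared wire vertex. -/
theorem copy_no_inr_sigma_in (G : TGraph V E) {b : V} (hG : G.IsPattern)
    (hb : G.ty b = .bang) {e : {e : E // G.s e ∈ G.bsucc b ∨ G.t e ∈ G.bsucc b}} {w : V}
    (hσ : e.1 ∈ G.sigmaEdges) (ht : G.embed b (G.t e.1) = Sum.inl w)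
    (hw : G.ty w = .wire) : False := by
  obtain ⟨ht1, ht2⟩ := G.embed_eq_inl.mp ht
  have hsb : G.s e.1 ∈ G.bsucc b := e.2.resolve_right ht2
  exact ht2 (G.no_sigma_exit hG hb hσ hsb (by rw [ht1]; exact hw))

/-- An `inr` edge of the copy cannot be a sigma out-edge of a shared wire vertex. -/
theorem copy_no_inr_sigma_out (G : TGraph V E) {b : V} (hG : G.IsPattern)
    (hb : G.ty b = .bang) {e : {e : E // G.s e ∈ G.bsucc b ∨ G.t e ∈ G.bsucc b}} {w : V}
    (hs : G.embed b (G.s e.1) = Sum.inl w) (hw : G.ty w = .wire) : False := by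
  obtain ⟨hs1, hs2⟩ := G.embed_eq_inl.mp hs
  have htb : G.t e.1 ∈ G.bsucc b := e.2.resolve_left hs2
  exact G.no_sigma_enter hG hb htb (by rw [hs1]; exact hw) hs2

end TGraph

namespace TGraph

variable {V E : Type}

theorem IsPattern.copy {G : TGraph V E} {b : V} (hG : G.IsPattern) (hb : G.ty b = .bang) :
    (G.copyGraph b).IsPattern := by
  have hnst := hG.2.2.2.2
  have htr := hG.2.2.1.2.2.2
  have hnn : (G.copyGraph b).NoNodeNode := by
    rintro (e | e) ⟨h1, h2⟩
    · exact hG.1.1 e ⟨h1, h2⟩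
    · rw [copy_s_inr, copy_ty_embed] at h1
      rw [copy_t_inr, copy_ty_embed] at h2
      exact hG.1.1 e.1 ⟨h1, h2⟩
  refine ⟨⟨hnn, ?_⟩, ⟨hnn, ?_⟩, ⟨?_, ?_, ?_, ?_⟩, ?_, ?_⟩
  · -- G3 : edges into bang come from bang
    rintro (e | e) h
    · exact hG.1.2 e h
    · rw [copy_t_inr, copy_ty_embed] at h
      rw [copy_s_inr, copy_ty_embed]
      exact hG.1.2 e.1 h
  · -- sigma string property
    rintro (w | w) hw
    · constructor
      · rintro (e₁ | e₁) (e₂ | e₂) hσ₁ hσ₂ ht₁ ht₂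
        · rw [copy_t_inl] at ht₁ ht₂
          exact congrArg Sum.inl ((hG.2.1.2 w hw).1 e₁ e₂ hσ₁ hσ₂
            (Sum.inl.inj ht₁) (Sum.inl.inj ht₂))
        · rw [copy_t_inr] at ht₂
          exact (copy_no_inr_sigma_in G hG hb ((copy_sigma_inr G b e₂).mp hσ₂) ht₂ hw).elim
        · rw [copy_t_inr] at ht₁
          exact (copy_no_inr_sigma_in G hG hb ((copy_sigma_inr G b e₁).mp hσ₁) ht₁ hw).elim
        · rw [copy_t_inr] at ht₁
          exact (copy_no_inr_sigma_in G hG hb ((copy_sigma_inr G b e₁).mp hσ₁) ht₁ hw).elim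
      · rintro (e₁ | e₁) (e₂ | e₂) hσ₁ hσ₂ hs₁ hs₂
        · rw [copy_s_inl] at hs₁ hs₂
          exact congrArg Sum.inl ((hG.2.1.2 w hw).2 e₁ e₂ hσ₁ hσ₂
            (Sum.inl.inj hs₁) (Sum.inl.inj hs₂))
        · rw [copy_s_inr] at hs₂
          exact (copy_no_inr_sigma_out G hG hb hs₂ hw).elim
        · rw [copy_s_inr] at hs₁
          exact (copy_no_inr_sigma_out G hG hb hs₁ hw).elim
        · rw [copy_s_inr] at hs₁
          exact (copy_no_inr_sigma_out G hG hb hs₁ hw).elim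
    · constructor
      · rintro (e₁ | e₁) (e₂ | e₂) hσ₁ hσ₂ ht₁ ht₂
        · rw [copy_t_inl] at ht₁; simp at ht₁
        · rw [copy_t_inl] at ht₁; simp at ht₁
        · rw [copy_t_inl] at ht₂; simp at ht₂
        · rw [copy_t_inr] at ht₁ ht₂
          exact congrArg Sum.inr (Subtype.ext ((hG.2.1.2 w.1 hw).1 e₁.1 e₂.1
            ((copy_sigma_inr G b e₁).mp hσ₁) ((copy_sigma_inr G b e₂).mp hσ₂)
            (G.embed_eq_inr.mp ht₁) (G.embed_eq_inr.mp ht₂)))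
      · rintro (e₁ | e₁) (e₂ | e₂) hσ₁ hσ₂ hs₁ hs₂
        · rw [copy_s_inl] at hs₁; simp at hs₁
        · rw [copy_s_inl] at hs₁; simp at hs₁
        · rw [copy_s_inl] at hs₂; simp at hs₂
        · rw [copy_s_inr] at hs₁ hs₂
          exact congrArg Sum.inr (Subtype.ext ((hG.2.1.2 w.1 hw).2 e₁.1 e₂.1
            ((copy_sigma_inr G b e₁).mp hσ₁) ((copy_sigma_inr G b e₂).mp hσ₂)
            (G.embed_eq_inr.mp hs₁) (G.embed_eq_inr.mp hs₂)))
  · -- beta simple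
    rintro (e₁ | e₁) (e₂ | e₂) hβ₁ hβ₂ hs ht
    · rw [copy_s_inl, copy_s_inl] at hs
      rw [copy_t_inl, copy_t_inl] at ht
      exact congrArg Sum.inl (hG.2.2.1.1 e₁ e₂ hβ₁ hβ₂ (Sum.inl.inj hs) (Sum.inl.inj ht))
    · rw [copy_s_inl, copy_s_inr] at hs
      rw [copy_t_inl, copy_t_inr] at ht
      obtain ⟨-, hs2⟩ := G.embed_eq_inl.mp hs.symm
      obtain ⟨-, ht2⟩ := G.embed_eq_inl.mp ht.symm
      exact absurd e₂.2 (by simp [hs2, ht2])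
    · rw [copy_s_inr, copy_s_inl] at hs
      rw [copy_t_inr, copy_t_inl] at ht
      obtain ⟨-, hs2⟩ := G.embed_eq_inl.mp hs
      obtain ⟨-, ht2⟩ := G.embed_eq_inl.mp ht
      exact absurd e₁.2 (by simp [hs2, ht2])
    · rw [copy_s_inr, copy_s_inr] at hs
      rw [copy_t_inr, copy_t_inr] at ht
      exact congrArg Sum.inr (Subtype.ext (hG.2.2.1.1 e₁.1 e₂.1
        ((copy_beta_inr G b e₁).mp hβ₁) ((copy_beta_inr G b e₂).mp hβ₂)
        (G.embed_inj hs) (G.embed_inj ht)))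
  · -- beta reflexive
    rintro (x | x) hx
    · exact (copy_succ_inl_inl G b).mpr (hG.2.2.1.2.1 x hx)
    · exact (copy_succ_inr_inr G b).mpr (hG.2.2.1.2.1 x.1 hx)
  · -- beta antisymmetric
    rintro (x | x) (y | y) hx hy h1 h2
    · exact congrArg Sum.inl (hG.2.2.1.2.2.1 x y hx hy
        ((copy_succ_inl_inl G b).mp h1) ((copy_succ_inl_inl G b).mp h2))
    · obtain ⟨h1a, h1b⟩ := (copy_succ_inl_inr G b).mp h1
      obtain ⟨h2a, -⟩ := (copy_succ_inr_inl G b).mp h2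
      have heq : x = y.1 := hG.2.2.1.2.2.1 x y.1 hx hy h1a h2a
      exact absurd (show x ∈ G.bsucc b by rw [heq]; exact y.2) h1b
    · obtain ⟨h1a, h1b⟩ := (copy_succ_inr_inl G b).mp h1
      exact absurd (hnst b x.1 hb hx x.2 h1a) h1b
    · exact congrArg Sum.inr (Subtype.ext (hG.2.2.1.2.2.1 x.1 y.1 hx hy
        ((copy_succ_inr_inr G b).mp h1) ((copy_succ_inr_inr G b).mp h2)))
  · -- beta transitive
    rintro (x | x) (y | y) (z | z) hx hy hz h1 h2
    · exact (copy_succ_inl_inl G b).mpr (htr x y z hx hy hz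
        ((copy_succ_inl_inl G b).mp h1) ((copy_succ_inl_inl G b).mp h2))
    · obtain ⟨h2a, h2b⟩ := (copy_succ_inl_inr G b).mp h2
      have h1' := (copy_succ_inl_inl G b).mp h1
      exact (copy_succ_inl_inr G b).mpr ⟨htr x y z.1 hx hy hz h1' h2a,
        fun hxB => h2b (hnst b x hb hx hxB h1')⟩
    · obtain ⟨h2a, h2b⟩ := (copy_succ_inr_inl G b).mp h2
      exact absurd (hnst b y.1 hb hy y.2 h2a) h2b
    · obtain ⟨h1a, h1b⟩ := (copy_succ_inl_inr G b).mp h1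
      exact (copy_succ_inl_inr G b).mpr
        ⟨htr x y.1 z.1 hx hy hz h1a ((copy_succ_inr_inr G b).mp h2), h1b⟩
    · obtain ⟨h1a, h1b⟩ := (copy_succ_inr_inl G b).mp h1
      exact absurd (hnst b x.1 hb hx x.2 h1a) h1b
    · obtain ⟨h1a, h1b⟩ := (copy_succ_inr_inl G b).mp h1
      exact absurd (hnst b x.1 hb hx x.2 h1a) h1b
    · obtain ⟨h2a, h2b⟩ := (copy_succ_inr_inl G b).mp h2
      exact absurd (hnst b y.1 hb hy y.2 h2a) h2b
    · exact (copy_succ_inr_inr G b).mpr (htr x.1 y.1 z.1 hx hy hz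
        ((copy_succ_inr_inr G b).mp h1) ((copy_succ_inr_inr G b).mp h2))
  · -- boxes open
    rintro (x | x) hx
    · constructor
      · -- inputs, box at inl x
        rintro (w | w) ⟨⟨-, hvB⟩, hw, hin⟩
        · have hnw : w ∉ G.bsucc x := fun hm => hvB ((copy_succ_inl_inl G b).mpr hm)
          have hGin : ((Sub.top G).minus (G.bbox x)).IsInput w := by
            refine ⟨⟨trivial, hnw⟩, hw, ?_⟩
            rintro e ⟨-, hs, ht⟩ hte
            exact hin (Sum.inl e)
              ⟨trivial, fun hm => hs ((copy_succ_inl_inl G b).mp hm),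
                fun hm => ht ((copy_succ_inl_inl G b).mp hm)⟩
              (by rw [copy_t_inl, hte])
          exact top_input_of _ ((copy_input_inl G b w).mpr
            (input_of_top G ((hG.2.2.2.1 x hx).1 w hGin)))
        · by_cases hxB : x ∈ G.bsucc b
          · refine ⟨trivial, hw, ?_⟩
            rintro (e | e) - hte
            · rw [copy_t_inl] at hte; simp at hte
            · refine hin (Sum.inr e) ⟨trivial, ?_, ?_⟩ hte
              · rw [copy_s_inr]
                by_cases hsB : G.s e.1 ∈ G.bsucc b
                · rw [G.embed_of_mem hsB]
                  intro hm
                  exact ((copy_succ_inl_inr G b).mp hm).2 hxB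
                · rw [G.embed_of_not_mem hsB]
                  intro hm
                  exact hsB (hnst b x hb hx hxB ((copy_succ_inl_inl G b).mp hm))
              · rw [hte]
                intro hm
                exact ((copy_succ_inl_inr G b).mp hm).2 hxB
          · have hnw : w.1 ∉ G.bsucc x := fun hm =>
              hvB ((copy_succ_inl_inr G b).mpr ⟨hm, hxB⟩)
            have hGin : ((Sub.top G).minus (G.bbox x)).IsInput w.1 := by
              refine ⟨⟨trivial, hnw⟩, hw, ?_⟩
              rintro e ⟨-, hs, ht⟩ hte
              have htouch : G.s e ∈ G.bsucc b ∨ G.t e ∈ G.bsucc b :=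
                Or.inr (by rw [hte]; exact w.2)
              have hm1 : (G.copyGraph b).s (Sum.inr ⟨e, htouch⟩) ∉
                  (G.copyGraph b).bsucc (Sum.inl x) := by
                rw [copy_s_inr]
                by_cases hsB : G.s e ∈ G.bsucc b
                · rw [G.embed_of_mem hsB]
                  intro hm; exact hs ((copy_succ_inl_inr G b).mp hm).1
                · rw [G.embed_of_not_mem hsB]
                  intro hm; exact hs ((copy_succ_inl_inl G b).mp hm)
              have hm2 : (G.copyGraph b).t (Sum.inr ⟨e, htouch⟩) ∉
                  (G.copyGraph b).bsucc (Sum.inl x) := by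
                rw [copy_t_inr, G.embed_eq_inr.mpr hte]
                intro hm; exact hnw ((copy_succ_inl_inr G b).mp hm).1
              have hbang := hin (Sum.inr ⟨e, htouch⟩) ⟨trivial, hm1, hm2⟩
                (by rw [copy_t_inr]; exact G.embed_eq_inr.mpr hte)
              rwa [copy_s_inr, copy_ty_embed] at hbang
            exact top_input_of _ ((copy_input_inr G b w).mpr
              (input_of_top G ((hG.2.2.2.1 x hx).1 w.1 hGin)))
      · -- outputs, box at inl x
        rintro (w | w) ⟨⟨-, hvB⟩, hw, hout⟩
        · have hnw : w ∉ G.bsucc x := fun hm => hvB ((copy_succ_inl_inl G b).mpr hm)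
          have hGout : ((Sub.top G).minus (G.bbox x)).IsOutput w := by
            refine ⟨⟨trivial, hnw⟩, hw, ?_⟩
            rintro e ⟨-, hs, ht⟩ hse
            exact hout (Sum.inl e)
              ⟨trivial, fun hm => hs ((copy_succ_inl_inl G b).mp hm),
                fun hm => ht ((copy_succ_inl_inl G b).mp hm)⟩
              (by rw [copy_s_inl, hse])
          exact top_output_of _ ((copy_output_inl G b w).mpr
            (output_of_top G ((hG.2.2.2.1 x hx).2 w hGout)))
        · by_cases hxB : x ∈ G.bsucc b
          · refine ⟨trivial, hw, ?_⟩
            rintro (e | e) - hse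
            · rw [copy_s_inl] at hse; simp at hse
            · refine hout (Sum.inr e) ⟨trivial, ?_, ?_⟩ hse
              · rw [hse]
                intro hm
                exact ((copy_succ_inl_inr G b).mp hm).2 hxB
              · rw [copy_t_inr]
                by_cases htB : G.t e.1 ∈ G.bsucc b
                · rw [G.embed_of_mem htB]
                  intro hm
                  exact ((copy_succ_inl_inr G b).mp hm).2 hxB
                · rw [G.embed_of_not_mem htB]
                  intro hm
                  exact htB (hnst b x hb hx hxB ((copy_succ_inl_inl G b).mp hm))
          · have hnw : w.1 ∉ G.bsucc x := fun hm =>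
              hvB ((copy_succ_inl_inr G b).mpr ⟨hm, hxB⟩)
            have hGout : ((Sub.top G).minus (G.bbox x)).IsOutput w.1 := by
              refine ⟨⟨trivial, hnw⟩, hw, ?_⟩
              rintro e ⟨-, hs, ht⟩ hse
              have htouch : G.s e ∈ G.bsucc b ∨ G.t e ∈ G.bsucc b :=
                Or.inl (by rw [hse]; exact w.2)
              have hm1 : (G.copyGraph b).s (Sum.inr ⟨e, htouch⟩) ∉
                  (G.copyGraph b).bsucc (Sum.inl x) := by
                rw [copy_s_inr, G.embed_eq_inr.mpr hse]
                intro hm; exact hnw ((copy_succ_inl_inr G b).mp hm).1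
              have hm2 : (G.copyGraph b).t (Sum.inr ⟨e, htouch⟩) ∉
                  (G.copyGraph b).bsucc (Sum.inl x) := by
                rw [copy_t_inr]
                by_cases htB : G.t e ∈ G.bsucc b
                · rw [G.embed_of_mem htB]
                  intro hm; exact ht ((copy_succ_inl_inr G b).mp hm).1
                · rw [G.embed_of_not_mem htB]
                  intro hm; exact ht ((copy_succ_inl_inl G b).mp hm)
              exact hout (Sum.inr ⟨e, htouch⟩) ⟨trivial, hm1, hm2⟩
                (by rw [copy_s_inr]; exact G.embed_eq_inr.mpr hse)
            exact top_output_of _ ((copy_output_inr G b w).mpr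
              (output_of_top G ((hG.2.2.2.1 x hx).2 w.1 hGout)))
    · have hnoinl : ∀ u : V, Sum.inl u ∉ (G.copyGraph b).bsucc (Sum.inr x) := by
        intro u hm
        obtain ⟨hm1, hm2⟩ := (copy_succ_inr_inl G b).mp hm
        exact hm2 (hnst b x.1 hb hx x.2 hm1)
      constructor
      · -- inputs, box at inr x
        rintro (w | w) ⟨⟨-, hvB⟩, hw, hin⟩
        · have hGin : G.IsInput w := by
            refine ⟨hw, fun e hte => ?_⟩
            exact hin (Sum.inl e) ⟨trivial, hnoinl _, hnoinl _⟩ (by rw [copy_t_inl, hte])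
          exact top_input_of _ ((copy_input_inl G b w).mpr hGin)
        · have hnw : w.1 ∉ G.bsucc x.1 := fun hm => hvB ((copy_succ_inr_inr G b).mpr hm)
          have hGin : ((Sub.top G).minus (G.bbox x.1)).IsInput w.1 := by
            refine ⟨⟨trivial, hnw⟩, hw, ?_⟩
            rintro e ⟨-, hs, ht⟩ hte
            have htouch : G.s e ∈ G.bsucc b ∨ G.t e ∈ G.bsucc b :=
              Or.inr (by rw [hte]; exact w.2)
            have hm1 : (G.copyGraph b).s (Sum.inr ⟨e, htouch⟩) ∉
                (G.copyGraph b).bsucc (Sum.inr x) := by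
              rw [copy_s_inr]
              by_cases hsB : G.s e ∈ G.bsucc b
              · rw [G.embed_of_mem hsB]
                intro hm; exact hs ((copy_succ_inr_inr G b).mp hm)
              · rw [G.embed_of_not_mem hsB]
                exact hnoinl _
            have hm2 : (G.copyGraph b).t (Sum.inr ⟨e, htouch⟩) ∉
                (G.copyGraph b).bsucc (Sum.inr x) := by
              rw [copy_t_inr, G.embed_eq_inr.mpr hte]
              intro hm; exact hnw ((copy_succ_inr_inr G b).mp hm)
            have hbang := hin (Sum.inr ⟨e, htouch⟩) ⟨trivial, hm1, hm2⟩
              (by rw [copy_t_inr]; exact G.embed_eq_inr.mpr hte)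
            rwa [copy_s_inr, copy_ty_embed] at hbang
          exact top_input_of _ ((copy_input_inr G b w).mpr
            (input_of_top G ((hG.2.2.2.1 x.1 hx).1 w.1 hGin)))
      · -- outputs, box at inr x
        rintro (w | w) ⟨⟨-, hvB⟩, hw, hout⟩
        · have hGout : G.IsOutput w := by
            refine ⟨hw, fun e hse => ?_⟩
            exact hout (Sum.inl e) ⟨trivial, hnoinl _, hnoinl _⟩ (by rw [copy_s_inl, hse])
          exact top_output_of _ ((copy_output_inl G b w).mpr hGout)
        · have hnw : w.1 ∉ G.bsucc x.1 := fun hm => hvB ((copy_succ_inr_inr G b).mpr hm)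
          have hGout : ((Sub.top G).minus (G.bbox x.1)).IsOutput w.1 := by
            refine ⟨⟨trivial, hnw⟩, hw, ?_⟩
            rintro e ⟨-, hs, ht⟩ hse
            have htouch : G.s e ∈ G.bsucc b ∨ G.t e ∈ G.bsucc b :=
              Or.inl (by rw [hse]; exact w.2)
            have hm1 : (G.copyGraph b).s (Sum.inr ⟨e, htouch⟩) ∉
                (G.copyGraph b).bsucc (Sum.inr x) := by
              rw [copy_s_inr, G.embed_eq_inr.mpr hse]
              intro hm; exact hnw ((copy_succ_inr_inr G b).mp hm)
            have hm2 : (G.copyGraph b).t (Sum.inr ⟨e, htouch⟩) ∉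
                (G.copyGraph b).bsucc (Sum.inr x) := by
              rw [copy_t_inr]
              by_cases htB : G.t e ∈ G.bsucc b
              · rw [G.embed_of_mem htB]
                intro hm; exact ht ((copy_succ_inr_inr G b).mp hm)
              · rw [G.embed_of_not_mem htB]
                exact hnoinl _
            exact hout (Sum.inr ⟨e, htouch⟩) ⟨trivial, hm1, hm2⟩
              (by rw [copy_s_inr]; exact G.embed_eq_inr.mpr hse)
          exact top_output_of _ ((copy_output_inr G b w).mpr
            (output_of_top G ((hG.2.2.2.1 x.1 hx).2 w.1 hGout)))
  · -- box nesting
    rintro (x | x) (y | y) hx hy h1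
    · have h1' := (copy_succ_inl_inl G b).mp h1
      rintro (z | z) hz
      · exact (copy_succ_inl_inl G b).mpr
          (hnst x y hx hy h1' ((copy_succ_inl_inl G b).mp hz))
      · obtain ⟨hz1, hz2⟩ := (copy_succ_inl_inr G b).mp hz
        exact (copy_succ_inl_inr G b).mpr ⟨hnst x y hx hy h1' hz1,
          fun hxB => hz2 (hnst b x hb hx hxB h1')⟩
    · obtain ⟨h1a, h1b⟩ := (copy_succ_inl_inr G b).mp h1
      rintro (z | z) hz
      · obtain ⟨hz1, hz2⟩ := (copy_succ_inr_inl G b).mp hz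
        exact absurd (hnst b y.1 hb hy y.2 hz1) hz2
      · exact (copy_succ_inl_inr G b).mpr
          ⟨hnst x y.1 hx hy h1a ((copy_succ_inr_inr G b).mp hz), h1b⟩
    · obtain ⟨h1a, h1b⟩ := (copy_succ_inr_inl G b).mp h1
      exact absurd (hnst b x.1 hb hx x.2 h1a) h1b
    · have h1' := (copy_succ_inr_inr G b).mp h1
      rintro (z | z) hz
      · obtain ⟨hz1, hz2⟩ := (copy_succ_inr_inl G b).mp hz
        exact absurd (hnst b y.1 hb hy y.2 hz1) hz2
      · exact (copy_succ_inr_inr G b).mpr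
          (hnst x.1 y.1 hx hy h1' ((copy_succ_inr_inr G b).mp hz))

end TGraph

namespace TGraph

variable {VI EI VL EL : Type} {I : TGraph VI EI} {L : TGraph VL EL}

theorem copyHom_fv_inl (f : GHom I L) (b : VI)
    (hbox : f.fv ⁻¹' (L.bsucc (f.fv b)) = I.bsucc b) (v : VI) :
    (copyHom f b hbox).fv (Sum.inl v) = Sum.inl (f.fv v) := rfl

theorem copyHom_fv_inr (f : GHom I L) (b : VI)
    (hbox : f.fv ⁻¹' (L.bsucc (f.fv b)) = I.bsucc b) (v : {w // w ∈ I.bsucc b}) :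
    (copyHom f b hbox).fv (Sum.inr v) = Sum.inr ⟨f.fv v.1, f.mem_bsucc v.2⟩ := rfl

theorem copyHom_fe_inl (f : GHom I L) (b : VI)
    (hbox : f.fv ⁻¹' (L.bsucc (f.fv b)) = I.bsucc b) (e : EI) :
    (copyHom f b hbox).fe (Sum.inl e) = Sum.inl (f.fe e) := rfl

theorem copy_bound_bij (f : GHom I L) (b : VI)
    (hbox : f.fv ⁻¹' (L.bsucc (f.fv b)) = I.bsucc b)
    (hbij : Set.BijOn f.fv {v | I.ty v = .wire} {v | L.IsInput v ∨ L.IsOutput v}) :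
    Set.BijOn (copyHom f b hbox).fv {v | (I.copyGraph b).ty v = .wire}
      {v | (L.copyGraph (f.fv b)).IsInput v ∨ (L.copyGraph (f.fv b)).IsOutput v} := by
  refine ⟨?_, ?_, ?_⟩
  · rintro (v | v) hv
    · have hv' : I.ty v = .wire := hv
      rcases hbij.mapsTo hv' with hio | hio
      · exact Or.inl ((copy_input_inl L (f.fv b) (f.fv v)).mpr hio)
      · exact Or.inr ((copy_output_inl L (f.fv b) (f.fv v)).mpr hio)
    · have hv' : I.ty v.1 = .wire := hv
      rcases hbij.mapsTo hv' with hio | hio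
      · exact Or.inl ((copy_input_inr L (f.fv b) _).mpr hio)
      · exact Or.inr ((copy_output_inr L (f.fv b) _).mpr hio)
  · rintro (v₁ | v₁) hv₁ (v₂ | v₂) hv₂ heq
    · have hv₁' : I.ty v₁ = .wire := hv₁
      have hv₂' : I.ty v₂ = .wire := hv₂
      rw [copyHom_fv_inl, copyHom_fv_inl] at heq
      exact congrArg Sum.inl (hbij.injOn hv₁' hv₂' (Sum.inl.inj heq))
    · rw [copyHom_fv_inl, copyHom_fv_inr] at heq; simp at heq
    · rw [copyHom_fv_inr, copyHom_fv_inl] at heq; simp at heq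
    · have hv₁' : I.ty v₁.1 = .wire := hv₁
      have hv₂' : I.ty v₂.1 = .wire := hv₂
      rw [copyHom_fv_inr, copyHom_fv_inr] at heq
      exact congrArg Sum.inr (Subtype.ext (hbij.injOn hv₁' hv₂'
        (congrArg Subtype.val (Sum.inr.inj heq))))
  · rintro (w | w) hw
    · have hw' : L.IsInput w ∨ L.IsOutput w := by
        rcases hw with hio | hio
        · exact Or.inl ((copy_input_inl L (f.fv b) w).mp hio)
        · exact Or.inr ((copy_output_inl L (f.fv b) w).mp hio)
      obtain ⟨v, hv, hfv⟩ := hbij.surjOn hw'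
      exact ⟨Sum.inl v, hv, by rw [copyHom_fv_inl, hfv]⟩
    · have hw' : L.IsInput w.1 ∨ L.IsOutput w.1 := by
        rcases hw with hio | hio
        · exact Or.inl ((copy_input_inr L (f.fv b) w).mp hio)
        · exact Or.inr ((copy_output_inr L (f.fv b) w).mp hio)
      obtain ⟨v, hv, hfv⟩ := hbij.surjOn hw'
      have hvB : v ∈ I.bsucc b := by
        rw [← hbox]
        show f.fv v ∈ L.bsucc (f.fv b)
        rw [hfv]; exact w.2
      exact ⟨Sum.inr ⟨v, hvB⟩, hv, by
        rw [copyHom_fv_inr]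
        exact congrArg Sum.inr (Subtype.ext hfv)⟩

theorem copy_beta_bijV (f : GHom I L) (b : VI)
    (hbox : f.fv ⁻¹' (L.bsucc (f.fv b)) = I.bsucc b)
    (hbij : Set.BijOn f.fv {v | I.ty v = .bang} {v | L.ty v = .bang}) :
    Set.BijOn (copyHom f b hbox).fv {v | (I.copyGraph b).ty v = .bang}
      {v | (L.copyGraph (f.fv b)).ty v = .bang} := by
  refine ⟨?_, ?_, ?_⟩
  · rintro (v | v) hv
    · exact hbij.mapsTo (show I.ty v = .bang from hv)
    · exact hbij.mapsTo (show I.ty v.1 = .bang from hv)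
  · rintro (v₁ | v₁) hv₁ (v₂ | v₂) hv₂ heq
    · rw [copyHom_fv_inl, copyHom_fv_inl] at heq
      exact congrArg Sum.inl (hbij.injOn (show I.ty v₁ = .bang from hv₁)
        (show I.ty v₂ = .bang from hv₂) (Sum.inl.inj heq))
    · rw [copyHom_fv_inl, copyHom_fv_inr] at heq; simp at heq
    · rw [copyHom_fv_inr, copyHom_fv_inl] at heq; simp at heq
    · rw [copyHom_fv_inr, copyHom_fv_inr] at heq
      exact congrArg Sum.inr (Subtype.ext (hbij.injOn (show I.ty v₁.1 = .bang from hv₁)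
        (show I.ty v₂.1 = .bang from hv₂) (congrArg Subtype.val (Sum.inr.inj heq))))
  · rintro (w | w) hw
    · obtain ⟨v, hv, hfv⟩ := hbij.surjOn (show L.ty w = .bang from hw)
      exact ⟨Sum.inl v, hv, by rw [copyHom_fv_inl, hfv]⟩
    · obtain ⟨v, hv, hfv⟩ := hbij.surjOn (show L.ty w.1 = .bang from hw)
      have hvB : v ∈ I.bsucc b := by
        rw [← hbox]
        show f.fv v ∈ L.bsucc (f.fv b)
        rw [hfv]; exact w.2
      exact ⟨Sum.inr ⟨v, hvB⟩, hv, by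
        rw [copyHom_fv_inr]
        exact congrArg Sum.inr (Subtype.ext hfv)⟩

theorem copy_beta_bijE (f : GHom I L) (b : VI)
    (hbox : f.fv ⁻¹' (L.bsucc (f.fv b)) = I.bsucc b)
    (hbij : Set.BijOn f.fe I.betaEdges L.betaEdges) :
    Set.BijOn (copyHom f b hbox).fe (I.copyGraph b).betaEdges
      (L.copyGraph (f.fv b)).betaEdges := by
  refine ⟨?_, ?_, ?_⟩
  · rintro (e | e) he
    · exact (copy_beta_inl L (f.fv b) (f.fe e)).mpr (hbij.mapsTo ((copy_beta_inl I b e).mp he))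
    · exact (copy_beta_inr L (f.fv b) _).mpr (hbij.mapsTo ((copy_beta_inr I b e).mp he))
  · rintro (e₁ | e₁) he₁ (e₂ | e₂) he₂ heq
    · rw [copyHom_fe_inl, copyHom_fe_inl] at heq
      exact congrArg Sum.inl (hbij.injOn ((copy_beta_inl I b e₁).mp he₁)
        ((copy_beta_inl I b e₂).mp he₂) (Sum.inl.inj heq))
    · rw [copyHom_fe_inl] at heq; simp [copyHom] at heq
    · rw [copyHom_fe_inl] at heq; simp [copyHom] at heq
    · exact congrArg Sum.inr (Subtype.ext (hbij.injOn ((copy_beta_inr I b e₁).mp he₁)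
        ((copy_beta_inr I b e₂).mp he₂) (congrArg Subtype.val (Sum.inr.inj heq))))
  · rintro (e | e) he
    · obtain ⟨e', he', hfe⟩ := hbij.surjOn ((copy_beta_inl L (f.fv b) e).mp he)
      exact ⟨Sum.inl e', (copy_beta_inl I b e').mpr he', by rw [copyHom_fe_inl, hfe]⟩
    · obtain ⟨e', he', hfe⟩ := hbij.surjOn ((copy_beta_inr L (f.fv b) e).mp he)
      have htouch : I.s e' ∈ I.bsucc b ∨ I.t e' ∈ I.bsucc b := by
        rcases e.2 with hc | hc
        · left
          rw [← hbox]
          show f.fv (I.s e') ∈ L.bsucc (f.fv b)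
          rw [← f.map_s, hfe]
          exact hc
        · right
          rw [← hbox]
          show f.fv (I.t e') ∈ L.bsucc (f.fv b)
          rw [← f.map_t, hfe]
          exact hc
      refine ⟨Sum.inr ⟨e', htouch⟩, (copy_beta_inr I b _).mpr he', ?_⟩
      exact congrArg Sum.inr (Subtype.ext hfe)

theorem copy_box (f : GHom I L) (b : VI)
    (hbox : f.fv ⁻¹' (L.bsucc (f.fv b)) = I.bsucc b)
    (hboxes : ∀ c, I.ty c = .bang → f.fv ⁻¹' (L.bsucc (f.fv c)) = I.bsucc c)
    {β : VI ⊕ {w // w ∈ I.bsucc b}} (hβ : (I.copyGraph b).ty β = .bang) :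
    (copyHom f b hbox).fv ⁻¹'
        ((L.copyGraph (f.fv b)).bsucc ((copyHom f b hbox).fv β)) =
      (I.copyGraph b).bsucc β := by
  have hBb : ∀ u, f.fv u ∈ L.bsucc (f.fv b) ↔ u ∈ I.bsucc b := fun u => Set.ext_iff.mp hbox u
  ext v
  rw [Set.mem_preimage]
  rcases β with x | x
  · have hBx : ∀ u, f.fv u ∈ L.bsucc (f.fv x) ↔ u ∈ I.bsucc x :=
      fun u => Set.ext_iff.mp (hboxes x hβ) u
    rcases v with u | u
    · rw [copyHom_fv_inl, copyHom_fv_inl, copy_succ_inl_inl L (f.fv b),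
        copy_succ_inl_inl I b]
      exact hBx u
    · rw [copyHom_fv_inr, copyHom_fv_inl, copy_succ_inl_inr L (f.fv b),
        copy_succ_inl_inr I b]
      exact and_congr (hBx u.1) (not_congr (hBb x))
  · have hBx : ∀ u, f.fv u ∈ L.bsucc (f.fv x.1) ↔ u ∈ I.bsucc x.1 :=
      fun u => Set.ext_iff.mp (hboxes x.1 hβ) u
    rcases v with u | u
    · rw [copyHom_fv_inl, copyHom_fv_inr, copy_succ_inr_inl L (f.fv b),
        copy_succ_inr_inl I b]
      exact and_congr (hBx u) (not_congr (hBb u))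
    · rw [copyHom_fv_inr, copyHom_fv_inr, copy_succ_inr_inr L (f.fv b),
        copy_succ_inr_inr I b]
      exact hBx u.1

end TGraph

open TGraph in
/-- Applying `PCOPY_b` to a rewrite pattern yields a rewrite
pattern. -/
theorem statement_14 {VL EL VI EI VR ER : Type}
    {L : TGraph VL EL} {I : TGraph VI EI} {R : TGraph VR ER}
    {i₁ : GHom I L} {i₂ : GHom I R}
    (h : IsRewritePattern L I R i₁ i₂)
    (b : VI) (hb : I.ty b = .bang) :
    IsRewritePattern (L.copyGraph (i₁.fv b)) (I.copyGraph b) (R.copyGraph (i₂.fv b))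
      (copyHom i₁ b (h.box₁ b hb)) (copyHom i₂ b (h.box₂ b hb)) := by
  have hbL : L.ty (i₁.fv b) = .bang := by rw [i₁.map_ty]; exact hb
  have hbR : R.ty (i₂.fv b) = .bang := by rw [i₂.map_ty]; exact hb
  refine ⟨h.patL.copy hbL, h.patI.copy hb, h.patR.copy hbR, ?_, ?_, ?_, ?_, ?_,
    ?_, ?_, ?_, ?_, ?_, ?_⟩
  · rintro (v | v) hv
    · exact h.no_node v hv
    · exact h.no_node v.1 hv
  · rintro (e | e) he
    · exact h.no_sigma_edges e he
    · exact h.no_sigma_edges e.1 ((copy_sigma_inr I b e).mp he)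
  · exact copy_bound_bij i₁ b (h.box₁ b hb) h.bound_bij₁
  · exact copy_bound_bij i₂ b (h.box₂ b hb) h.bound_bij₂
  · rintro (v | v) hv
    · refine ⟨?_, ?_⟩
      · exact (copy_input_inl L (i₁.fv b) (i₁.fv v)).trans
          (((h.inout v hv).1).trans (copy_input_inl R (i₂.fv b) (i₂.fv v)).symm)
      · exact (copy_output_inl L (i₁.fv b) (i₁.fv v)).trans
          (((h.inout v hv).2).trans (copy_output_inl R (i₂.fv b) (i₂.fv v)).symm)
    · refine ⟨?_, ?_⟩
      · exact (copy_input_inr L (i₁.fv b) ⟨i₁.fv v.1, i₁.mem_bsucc v.2⟩).trans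
          (((h.inout v.1 hv).1).trans
            (copy_input_inr R (i₂.fv b) ⟨i₂.fv v.1, i₂.mem_bsucc v.2⟩).symm)
      · exact (copy_output_inr L (i₁.fv b) ⟨i₁.fv v.1, i₁.mem_bsucc v.2⟩).trans
          (((h.inout v.1 hv).2).trans
            (copy_output_inr R (i₂.fv b) ⟨i₂.fv v.1, i₂.mem_bsucc v.2⟩).symm)
  · exact copy_beta_bijV i₁ b (h.box₁ b hb) h.beta_bijV₁
  · exact copy_beta_bijE i₁ b (h.box₁ b hb) h.beta_bijE₁
  · exact copy_beta_bijV i₂ b (h.box₂ b hb) h.beta_bijV₂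
  · exact copy_beta_bijE i₂ b (h.box₂ b hb) h.beta_bijE₂
  · exact fun β hβ => copy_box i₁ b (h.box₁ b hb) h.box₁ hβ
  · exact fun β hβ => copy_box i₂ b (h.box₂ b hb) h.box₂ hβ
end

section
/- Let L ←i₁− I −i₂→ R be a rewrite pattern and b a !-vertex of I. Then the span L' ←i₁'− I' −i₂'→ R' obtained by applying PKILL_b is again a rewrite pattern. -/
namespace TGraph

variable {V E : Type}

/-- `bsucc` in a full restricted subgraph. -/
theorem restrict_bsucc_iff (G : TGraph V E) (S : Set V) (c v : {v : V // v ∈ S}) :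
    v ∈ (G.restrict S).bsucc c ↔ v.1 ∈ G.bsucc c.1 := by
  constructor
  · rintro ⟨e, hs, ht⟩
    exact ⟨e.1, congrArg Subtype.val hs, congrArg Subtype.val ht⟩
  · rintro ⟨e, hs, ht⟩
    exact ⟨⟨e, by rw [hs]; exact c.2, by rw [ht]; exact v.2⟩,
      Subtype.ext hs, Subtype.ext ht⟩

/-- Cross-boundary lemma for inputs: an edge leaving an (open) `!`-box and
ending at a wire-vertex outside the box has a `!`-vertex source. -/
theorem cross_in {G : TGraph V E} (hG : G.IsPattern) {c : V} (hc : G.ty c = .bang)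
    {e : E} (hs : G.s e ∈ G.bsucc c) (ht : G.t e ∉ G.bsucc c)
    (hw : G.ty (G.t e) = .wire) : G.ty (G.s e) = .bang := by
  by_cases hbang : G.ty (G.s e) = .bang
  · exact hbang
  have hopen := hG.2.2.2.1 c hc
  have hin : ((Sub.top G).minus (G.bbox c)).IsInput (G.t e) := by
    refine ⟨⟨trivial, ht⟩, hw, ?_⟩
    intro e' he' hte'
    by_contra hb'
    have h1 : e ∈ G.sigmaEdges := ⟨hbang, by rw [hw]; decide⟩
    have h2 : e' ∈ G.sigmaEdges := ⟨hb', by rw [hte', hw]; decide⟩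
    have heq := (hG.2.1.2 (G.t e) hw).1 e' e h2 h1 hte' rfl
    subst heq
    exact he'.2.1 hs
  exact (hopen.1 (G.t e) hin).2.2 e trivial rfl

/-- Cross-boundary lemma for outputs: there is no edge from a wire-vertex
outside an (open) `!`-box into the box. -/
theorem cross_out {G : TGraph V E} (hG : G.IsPattern) {c : V} (hc : G.ty c = .bang)
    {e : E} (hs : G.s e ∉ G.bsucc c) (ht : G.t e ∈ G.bsucc c)
    (hw : G.ty (G.s e) = .wire) : False := by
  have hopen := hG.2.2.2.1 c hc
  have hout : ((Sub.top G).minus (G.bbox c)).IsOutput (G.s e) := by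
    refine ⟨⟨trivial, hs⟩, hw, ?_⟩
    intro e' he' hse'
    have hsw : G.ty (G.s e') = .wire := by rw [hse']; exact hw
    have htnb : G.ty (G.t e') ≠ .bang := fun hx => by
      have := hG.1.2 e' hx; rw [hsw] at this; cases this
    have htnb0 : G.ty (G.t e) ≠ .bang := fun hx => by
      have := hG.1.2 e hx; rw [hw] at this; cases this
    have h1 : e ∈ G.sigmaEdges := ⟨by rw [hw]; decide, htnb0⟩
    have h2 : e' ∈ G.sigmaEdges := ⟨by rw [hsw]; decide, htnb⟩
    have heq := (hG.2.1.2 (G.s e) hw).2 e' e h2 h1 hse' rfl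
    subst heq
    exact he'.2.2 ht
  exact (hopen.2 (G.s e) hout).2.2 e trivial rfl

theorem kill_isInput_iff {G : TGraph V E} (hG : G.IsPattern) {b : V}
    (hb : G.ty b = .bang) (v : {v : V // v ∈ {v : V | v ∉ G.bsucc b}}) :
    (G.killGraph b).IsInput v ↔ G.IsInput v.1 := by
  constructor
  · rintro ⟨hw, hin⟩
    refine ⟨hw, ?_⟩
    intro e hte
    by_cases hsb : G.s e ∈ G.bsucc b
    · exact cross_in hG hb hsb (by rw [hte]; exact v.2) (by rw [hte]; exact hw)
    · exact hin ⟨e, hsb, by rw [hte]; exact v.2⟩ (Subtype.ext hte)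
  · rintro ⟨hw, hin⟩
    exact ⟨hw, fun e hte => hin e.1 (congrArg Subtype.val hte)⟩

theorem kill_isOutput_iff {G : TGraph V E} (hG : G.IsPattern) {b : V}
    (hb : G.ty b = .bang) (v : {v : V // v ∈ {v : V | v ∉ G.bsucc b}}) :
    (G.killGraph b).IsOutput v ↔ G.IsOutput v.1 := by
  constructor
  · rintro ⟨hw, hout⟩
    refine ⟨hw, ?_⟩
    intro e hse
    by_cases htb : G.t e ∈ G.bsucc b
    · exact cross_out hG hb (by rw [hse]; exact v.2) htb (by rw [hse]; exact hw)
    · exact hout ⟨e, by rw [hse]; exact v.2, htb⟩ (Subtype.ext hse)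
  · rintro ⟨hw, hout⟩
    exact ⟨hw, fun e hse => hout e.1 (congrArg Subtype.val hse)⟩

/-- `KILL_b` preserves pattern graphs. -/
theorem kill_isPattern {G : TGraph V E} (hG : G.IsPattern) {b : V}
    (hb : G.ty b = .bang) : (G.killGraph b).IsPattern := by
  refine ⟨⟨fun e => hG.1.1 e.1, fun e hx => hG.1.2 e.1 hx⟩, ?_, ?_, ?_, ?_⟩
  · refine ⟨fun e => hG.2.1.1 e.1, fun v hv => ?_⟩
    refine ⟨fun e₁ e₂ h1 h2 ht1 ht2 => ?_, fun e₁ e₂ h1 h2 hs1 hs2 => ?_⟩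
    · exact Subtype.ext ((hG.2.1.2 v.1 hv).1 e₁.1 e₂.1 h1 h2
        (congrArg Subtype.val ht1) (congrArg Subtype.val ht2))
    · exact Subtype.ext ((hG.2.1.2 v.1 hv).2 e₁.1 e₂.1 h1 h2
        (congrArg Subtype.val hs1) (congrArg Subtype.val hs2))
  · refine ⟨fun e₁ e₂ h1 h2 hs ht => Subtype.ext (hG.2.2.1.1 e₁.1 e₂.1 h1 h2
      (congrArg Subtype.val hs) (congrArg Subtype.val ht)), ?_, ?_, ?_⟩
    · intro c hc
      exact (restrict_bsucc_iff G _ c c).2 (hG.2.2.1.2.1 c.1 hc)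
    · intro c c' hc hc' h1 h2
      exact Subtype.ext (hG.2.2.1.2.2.1 c.1 c'.1 hc hc'
        ((restrict_bsucc_iff G _ c c').1 h1) ((restrict_bsucc_iff G _ c' c).1 h2))
    · intro a c d ha hc hd h1 h2
      exact (restrict_bsucc_iff G _ a d).2 (hG.2.2.1.2.2.2 a.1 c.1 d.1 ha hc hd
        ((restrict_bsucc_iff G _ a c).1 h1) ((restrict_bsucc_iff G _ c d).1 h2))
  · intro c hc
    constructor
    · rintro v ⟨⟨-, hvB⟩, hw, hin⟩
      refine ⟨trivial, hw, ?_⟩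
      intro e _ hte
      have htv : G.t e.1 = v.1 := congrArg Subtype.val hte
      by_cases hsB : G.s e.1 ∈ G.bsucc c.1
      · refine cross_in hG hc hsB ?_ (by rw [htv]; exact hw)
        intro hmem
        exact hvB ((restrict_bsucc_iff G _ c v).2 (htv ▸ hmem))
      · refine hin e ⟨trivial, ?_, ?_⟩ hte
        · exact fun hm => hsB ((restrict_bsucc_iff G _ c _).1 hm)
        · rw [hte]; exact hvB
    · rintro v ⟨⟨-, hvB⟩, hw, hout⟩
      refine ⟨trivial, hw, ?_⟩
      intro e _ hse
      have hsv : G.s e.1 = v.1 := congrArg Subtype.val hse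
      by_cases htB : G.t e.1 ∈ G.bsucc c.1
      · refine cross_out hG hc ?_ htB (by rw [hsv]; exact hw)
        intro hmem
        exact hvB ((restrict_bsucc_iff G _ c v).2 (hsv ▸ hmem))
      · refine hout e ⟨trivial, ?_, ?_⟩ hse
        · rw [hse]; exact hvB
        · exact fun hm => htB ((restrict_bsucc_iff G _ c _).1 hm)
  · intro c c' hc hc' hmem v hv
    exact (restrict_bsucc_iff G _ c v).2 (hG.2.2.2.2 c.1 c'.1 hc hc'
      ((restrict_bsucc_iff G _ c c').1 hmem) ((restrict_bsucc_iff G _ c' v).1 hv))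

end TGraph

open TGraph in
/-- Applying `PKILL_b` to a rewrite pattern yields a rewrite
pattern. -/
theorem statement_15 {VL EL VI EI VR ER : Type}
    {L : TGraph VL EL} {I : TGraph VI EI} {R : TGraph VR ER}
    {i₁ : GHom I L} {i₂ : GHom I R}
    (h : IsRewritePattern L I R i₁ i₂)
    (b : VI) (hb : I.ty b = .bang) :
    IsRewritePattern (L.killGraph (i₁.fv b)) (I.killGraph b) (R.killGraph (i₂.fv b))
      (killHom i₁ b (h.box₁ b hb)) (killHom i₂ b (h.box₂ b hb)) := by
  have hLb : L.ty (i₁.fv b) = .bang := by rw [i₁.map_ty]; exact hb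
  have hRb : R.ty (i₂.fv b) = .bang := by rw [i₂.map_ty]; exact hb
  have hnotmem₁ : ∀ {v : VI}, v ∉ I.bsucc b → i₁.fv v ∉ L.bsucc (i₁.fv b) :=
    fun {v} hv hc => hv (mem_of_preimage_eq i₁.fv (h.box₁ b hb) hc)
  have hnotmem₂ : ∀ {v : VI}, v ∉ I.bsucc b → i₂.fv v ∉ R.bsucc (i₂.fv b) :=
    fun {v} hv hc => hv (mem_of_preimage_eq i₂.fv (h.box₂ b hb) hc)
  refine
    { patL := kill_isPattern h.patL hLb
      patI := kill_isPattern h.patI hb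
      patR := kill_isPattern h.patR hRb
      no_node := fun v => h.no_node v.1
      no_sigma_edges := fun e he => h.no_sigma_edges e.1 he
      bound_bij₁ := ⟨?_, ?_, ?_⟩
      bound_bij₂ := ⟨?_, ?_, ?_⟩
      inout := ?_
      beta_bijV₁ := ⟨?_, ?_, ?_⟩
      beta_bijE₁ := ⟨?_, ?_, ?_⟩
      beta_bijV₂ := ⟨?_, ?_, ?_⟩
      beta_bijE₂ := ⟨?_, ?_, ?_⟩
      box₁ := ?_
      box₂ := ?_ }
  -- bound_bij₁
  · intro v hv
    rcases h.bound_bij₁.mapsTo hv with hin | hout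
    · exact Or.inl ((kill_isInput_iff h.patL hLb _).2 hin)
    · exact Or.inr ((kill_isOutput_iff h.patL hLb _).2 hout)
  · intro v hv w hw heq
    exact Subtype.ext (h.bound_bij₁.injOn hv hw (congrArg Subtype.val heq))
  · intro w hw
    have hwb : L.IsInput w.1 ∨ L.IsOutput w.1 := by
      rcases hw with hin | hout
      · exact Or.inl ((kill_isInput_iff h.patL hLb w).1 hin)
      · exact Or.inr ((kill_isOutput_iff h.patL hLb w).1 hout)
    obtain ⟨v, hv, hveq⟩ := h.bound_bij₁.surjOn hwb
    refine ⟨⟨v, fun hm => w.2 (hveq ▸ i₁.mem_bsucc hm)⟩, hv, Subtype.ext hveq⟩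
  -- bound_bij₂
  · intro v hv
    rcases h.bound_bij₂.mapsTo hv with hin | hout
    · exact Or.inl ((kill_isInput_iff h.patR hRb _).2 hin)
    · exact Or.inr ((kill_isOutput_iff h.patR hRb _).2 hout)
  · intro v hv w hw heq
    exact Subtype.ext (h.bound_bij₂.injOn hv hw (congrArg Subtype.val heq))
  · intro w hw
    have hwb : R.IsInput w.1 ∨ R.IsOutput w.1 := by
      rcases hw with hin | hout
      · exact Or.inl ((kill_isInput_iff h.patR hRb w).1 hin)
      · exact Or.inr ((kill_isOutput_iff h.patR hRb w).1 hout)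
    obtain ⟨v, hv, hveq⟩ := h.bound_bij₂.surjOn hwb
    refine ⟨⟨v, fun hm => w.2 (hveq ▸ i₂.mem_bsucc hm)⟩, hv, Subtype.ext hveq⟩
  -- inout
  · intro v hv
    refine ⟨?_, ?_⟩
    · exact ((kill_isInput_iff h.patL hLb _).trans
        ((h.inout v.1 hv).1.trans (kill_isInput_iff h.patR hRb ((killHom i₂ b (h.box₂ b hb)).fv v)).symm))
    · exact ((kill_isOutput_iff h.patL hLb _).trans
        ((h.inout v.1 hv).2.trans (kill_isOutput_iff h.patR hRb ((killHom i₂ b (h.box₂ b hb)).fv v)).symm))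
  -- beta_bijV₁
  · intro v hv
    exact h.beta_bijV₁.mapsTo hv
  · intro v hv w hw heq
    exact Subtype.ext (h.beta_bijV₁.injOn hv hw (congrArg Subtype.val heq))
  · intro w hw
    obtain ⟨v, hv, hveq⟩ := h.beta_bijV₁.surjOn hw
    exact ⟨⟨v, fun hm => w.2 (hveq ▸ i₁.mem_bsucc hm)⟩, hv, Subtype.ext hveq⟩
  -- beta_bijE₁
  · intro e he
    exact h.beta_bijE₁.mapsTo he
  · intro e₁ h1 e₂ h2 heq
    exact Subtype.ext (h.beta_bijE₁.injOn h1 h2 (congrArg Subtype.val heq))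
  · intro f hf
    obtain ⟨e, he, heq⟩ := h.beta_bijE₁.surjOn hf
    have hse : I.s e ∉ I.bsucc b := by
      intro hm
      apply f.2.1
      have : L.s (i₁.fe e) = i₁.fv (I.s e) := i₁.map_s e
      rw [← heq, this]
      exact i₁.mem_bsucc hm
    have hte : I.t e ∉ I.bsucc b := by
      intro hm
      apply f.2.2
      have : L.t (i₁.fe e) = i₁.fv (I.t e) := i₁.map_t e
      rw [← heq, this]
      exact i₁.mem_bsucc hm
    exact ⟨⟨e, hse, hte⟩, he, Subtype.ext heq⟩
  -- beta_bijV₂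
  · intro v hv
    exact h.beta_bijV₂.mapsTo hv
  · intro v hv w hw heq
    exact Subtype.ext (h.beta_bijV₂.injOn hv hw (congrArg Subtype.val heq))
  · intro w hw
    obtain ⟨v, hv, hveq⟩ := h.beta_bijV₂.surjOn hw
    exact ⟨⟨v, fun hm => w.2 (hveq ▸ i₂.mem_bsucc hm)⟩, hv, Subtype.ext hveq⟩
  -- beta_bijE₂
  · intro e he
    exact h.beta_bijE₂.mapsTo he
  · intro e₁ h1 e₂ h2 heq
    exact Subtype.ext (h.beta_bijE₂.injOn h1 h2 (congrArg Subtype.val heq))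
  · intro f hf
    obtain ⟨e, he, heq⟩ := h.beta_bijE₂.surjOn hf
    have hse : I.s e ∉ I.bsucc b := by
      intro hm
      apply f.2.1
      have : R.s (i₂.fe e) = i₂.fv (I.s e) := i₂.map_s e
      rw [← heq, this]
      exact i₂.mem_bsucc hm
    have hte : I.t e ∉ I.bsucc b := by
      intro hm
      apply f.2.2
      have : R.t (i₂.fe e) = i₂.fv (I.t e) := i₂.map_t e
      rw [← heq, this]
      exact i₂.mem_bsucc hm
    exact ⟨⟨e, hse, hte⟩, he, Subtype.ext heq⟩
  -- box₁
  · intro c hc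
    ext v
    simp only [Set.mem_preimage]
    constructor
    · intro hm
      refine (restrict_bsucc_iff I _ c v).2 ?_
      exact mem_of_preimage_eq i₁.fv (h.box₁ c.1 hc)
        ((restrict_bsucc_iff L _ _ _).1 hm)
    · intro hm
      exact (restrict_bsucc_iff L _ _ _).2
        (i₁.mem_bsucc ((restrict_bsucc_iff I _ c v).1 hm))
  -- box₂
  · intro c hc
    ext v
    simp only [Set.mem_preimage]
    constructor
    · intro hm
      refine (restrict_bsucc_iff I _ c v).2 ?_
      exact mem_of_preimage_eq i₂.fv (h.box₂ c.1 hc)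
        ((restrict_bsucc_iff R _ _ _).1 hm)
    · intro hm
      exact (restrict_bsucc_iff R _ _ _).2
        (i₂.mem_bsucc ((restrict_bsucc_iff I _ c v).1 hm))
end

section
/- Let L ←i₁− I −i₂→ R be a rewrite pattern and let b, b' be !-vertices of I such that the pairs (b,b'), (i₁(b),i₁(b')) and (i₂(b),i₂(b')) are each mergable (i.e., satisfy B↑(b)∖b = B↑(b')∖b' and B(b) ∩ B(b') = ∅ in the respective graphs). Then the span L' ←i₁'− I' −i₂'→ R' obtained by applying PMERGE_{b,b'} is again a rewrite pattern. -/
namespace TGraph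

variable {VL EL VI EI VR ER : Type}

section MergeLemmas
variable {V E : Type}

theorem mergeVRel_equiv (b b' : V) : Equivalence (mergeVRel b b') := by
  refine ⟨fun x => Or.inl rfl, ?_, ?_⟩
  · rintro x y (rfl | ⟨rfl, rfl⟩ | ⟨rfl, rfl⟩)
    · exact Or.inl rfl
    · exact Or.inr (Or.inr ⟨rfl, rfl⟩)
    · exact Or.inr (Or.inl ⟨rfl, rfl⟩)
  · rintro x y z (rfl | ⟨rfl, rfl⟩ | ⟨rfl, rfl⟩) h
    · exact h
    · rcases h with rfl | ⟨h1, rfl⟩ | ⟨-, rfl⟩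
      · exact Or.inr (Or.inl ⟨rfl, rfl⟩)
      · rw [h1]; exact Or.inl rfl
      · exact Or.inl rfl
    · rcases h with rfl | ⟨-, rfl⟩ | ⟨h1, rfl⟩
      · exact Or.inr (Or.inr ⟨rfl, rfl⟩)
      · exact Or.inl rfl
      · rw [h1]; exact Or.inl rfl

theorem quotV_eq {b b' x y : V} :
    (Quot.mk (mergeVRel b b') x = Quot.mk (mergeVRel b b') y) ↔ mergeVRel b b' x y := by
  rw [Quot.eq]
  exact (mergeVRel_equiv b b').eqvGen_iff

variable {G : TGraph V E} {b b' : V}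

theorem bpred_iff {x y : V} : x ∈ G.bpred y ↔ y ∈ G.bsucc x := Iff.rfl

theorem IsPattern.beta_simple (hG : G.IsPattern) :
    ∀ e₁ e₂, e₁ ∈ G.betaEdges → e₂ ∈ G.betaEdges →
      G.s e₁ = G.s e₂ → G.t e₁ = G.t e₂ → e₁ = e₂ := hG.2.2.1.1
theorem IsPattern.beta_refl (hG : G.IsPattern) :
    ∀ b, G.ty b = .bang → b ∈ G.bsucc b := hG.2.2.1.2.1
theorem IsPattern.beta_antisymm (hG : G.IsPattern) :
    ∀ b b', G.ty b = .bang → G.ty b' = .bang →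
      b' ∈ G.bsucc b → b ∈ G.bsucc b' → b = b' := hG.2.2.1.2.2.1
theorem IsPattern.box_open (hG : G.IsPattern) :
    ∀ b, G.ty b = .bang → (G.bbox b).IsOpen := hG.2.2.2.1
theorem IsPattern.nest (hG : G.IsPattern) :
    ∀ b b', G.ty b = .bang → G.ty b' = .bang → b' ∈ G.bsucc b →
      G.bsucc b' ⊆ G.bsucc b := hG.2.2.2.2
theorem IsPattern.g3 (hG : G.IsPattern) : G.IsG3 := hG.1
theorem IsPattern.sigmaString (hG : G.IsPattern) : G.SigmaIsStringGraph := hG.2.1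

theorem bang_of_mem_bpred (hG : G.IsG3) {c x : V} (hc : G.ty c = .bang)
    (hx : x ∈ G.bpred c) : G.ty x = .bang := by
  obtain ⟨e, hs, ht⟩ := hx
  have := hG.2 e (by rw [ht]; exact hc)
  rwa [hs] at this

section Mergable
variable (hG : G.IsPattern) (hb : G.ty b = .bang) (hb' : G.ty b' = .bang)
  (hpred : G.bpred b \ {b} = G.bpred b' \ {b'})
  (hdisj : G.bsucc b ∩ G.bsucc b' = ∅)

include hG hb hb' hdisj in
theorem not_cross : b' ∉ G.bsucc b ∧ b ∉ G.bsucc b' := by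
  constructor
  · intro hc
    exact absurd (Set.mem_inter hc (hG.beta_refl b' hb')) (by rw [hdisj]; exact id)
  · intro hc
    exact absurd (Set.mem_inter (hG.beta_refl b hb) hc) (by rw [hdisj]; exact id)

include hG hb hb' hdisj in
theorem bne : b ≠ b' := by
  rintro rfl
  exact (not_cross hG hb hb' hdisj).1 (hG.beta_refl b hb)

include hpred in
theorem succ_b_iff {c : V} (hc1 : c ≠ b) (hc2 : c ≠ b') :
    b ∈ G.bsucc c ↔ b' ∈ G.bsucc c := by
  constructor
  · intro hc
    have : c ∈ G.bpred b' \ {b'} := by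
      rw [← hpred]; exact ⟨bpred_iff.mpr hc, hc1⟩
    exact bpred_iff.mp this.1
  · intro hc
    have : c ∈ G.bpred b \ {b} := by
      rw [hpred]; exact ⟨bpred_iff.mpr hc, hc2⟩
    exact bpred_iff.mp this.1

include hpred in
theorem mem_bpred_both {x : V} (hx : x ∈ G.bpred b) (hx1 : x ≠ b) :
    x ∈ G.bpred b' := by
  have : x ∈ G.bpred b' \ {b'} := by rw [← hpred]; exact ⟨hx, hx1⟩
  exact this.1

include hpred in
theorem mem_bpred_both' {x : V} (hx : x ∈ G.bpred b') (hx2 : x ≠ b') :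
    x ∈ G.bpred b := by
  have : x ∈ G.bpred b \ {b} := by rw [hpred]; exact ⟨hx, hx2⟩
  exact this.1

end Mergable

open Classical in
/-- The translation of `bsucc` under merge. -/
noncomputable def mset (G : TGraph V E) (b b' c : V) : Set V :=
  if c = b ∨ c = b' then G.bsucc b ∪ G.bsucc b' else G.bsucc c

section Mergable2
variable (hG : G.IsPattern) (hb : G.ty b = .bang) (hb' : G.ty b' = .bang)
  (hpred : G.bpred b \ {b} = G.bpred b' \ {b'})
  (hdisj : G.bsucc b ∩ G.bsucc b' = ∅)

include hG hb hb' hpred in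
theorem mem_merge_bsucc (c v : V) :
    (Quot.mk (mergeVRel b b') v ∈ (G.mergeGraph b b').bsucc (Quot.mk _ c)) ↔
      v ∈ G.mset b b' c := by
  classical
  unfold mset
  constructor
  · rintro ⟨q, hs, ht⟩
    obtain ⟨e, rfl⟩ := q.exists_rep
    rw [mergeGraph_s_mk, quotV_eq] at hs
    rw [mergeGraph_t_mk, quotV_eq] at ht
    by_cases hc : c = b ∨ c = b'
    · rw [if_pos hc]
      have hse : G.s e = b ∨ G.s e = b' := by
        rcases hs with rfl | ⟨h1, h2⟩ | ⟨h1, h2⟩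
        · exact hc
        · exact Or.inl h1
        · exact Or.inr h1
      rcases ht with rfl | ⟨h1, h2⟩ | ⟨h1, h2⟩
      · rcases hse with hse | hse
        · exact Or.inl ⟨e, hse, rfl⟩
        · exact Or.inr ⟨e, hse, rfl⟩
      · rw [h2]; exact Or.inr (hG.beta_refl b' hb')
      · rw [h2]; exact Or.inl (hG.beta_refl b hb)
    · rw [if_neg hc]
      push_neg at hc
      have hse : G.s e = c := by
        rcases hs with rfl | ⟨h1, h2⟩ | ⟨h1, h2⟩
        · rfl
        · exact absurd h2 hc.2
        · exact absurd h2 hc.1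
      rcases ht with rfl | ⟨h1, h2⟩ | ⟨h1, h2⟩
      · exact ⟨e, hse, rfl⟩
      · rw [h2]; exact (succ_b_iff hpred hc.1 hc.2).mp ⟨e, hse, h1⟩
      · rw [h2]; exact (succ_b_iff hpred hc.1 hc.2).mpr ⟨e, hse, h1⟩
  · intro hv
    by_cases hc : c = b ∨ c = b'
    · rw [if_pos hc] at hv
      rcases hv with ⟨e, hse, hte⟩ | ⟨e, hse, hte⟩
      · refine ⟨Quot.mk _ e, ?_, ?_⟩
        · rw [mergeGraph_s_mk, quotV_eq, hse]
          rcases hc with rfl | rfl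
          · exact Or.inl rfl
          · exact Or.inr (Or.inl ⟨rfl, rfl⟩)
        · rw [mergeGraph_t_mk, hte]
      · refine ⟨Quot.mk _ e, ?_, ?_⟩
        · rw [mergeGraph_s_mk, quotV_eq, hse]
          rcases hc with rfl | rfl
          · exact Or.inr (Or.inr ⟨rfl, rfl⟩)
          · exact Or.inl rfl
        · rw [mergeGraph_t_mk, hte]
    · rw [if_neg hc] at hv
      obtain ⟨e, hse, hte⟩ := hv
      exact ⟨Quot.mk _ e, by rw [mergeGraph_s_mk, hse], by rw [mergeGraph_t_mk, hte]⟩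

end Mergable2

theorem ty_mk' (hbb' : G.ty b = G.ty b') (v : V) :
    (G.mergeGraph b b').ty (Quot.mk _ v) = G.ty v := by
  rw [mergeGraph_ty_mk]
  split_ifs with h
  · rw [h, hbb']
  · rfl

end MergeLemmas

section MergeLemmas2
variable {V E : Type} {G : TGraph V E} {b b' : V}

theorem mergeVRel_eq_right (hb : G.ty b = .bang) (hb' : G.ty b' = .bang)
    {x y : V} (hy : G.ty y ≠ .bang) (h : mergeVRel b b' x y) : x = y := by
  rcases h with rfl | ⟨h1, h2⟩ | ⟨h1, h2⟩
  · rfl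
  · exact absurd (by rw [h2]; exact hb') hy
  · exact absurd (by rw [h2]; exact hb) hy

theorem merge_sigmaEdge_iff (hbb' : G.ty b = G.ty b') (e : E) :
    Quot.mk (G.mergeERel b b') e ∈ (G.mergeGraph b b').sigmaEdges ↔ e ∈ G.sigmaEdges := by
  unfold sigmaEdges
  simp only [Set.mem_setOf_eq, mergeGraph_s_mk, mergeGraph_t_mk, ty_mk' hbb']

theorem merge_betaEdge_iff (hbb' : G.ty b = G.ty b') (e : E) :
    Quot.mk (G.mergeERel b b') e ∈ (G.mergeGraph b b').betaEdges ↔ e ∈ G.betaEdges := by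
  unfold betaEdges
  simp only [Set.mem_setOf_eq, mergeGraph_s_mk, mergeGraph_t_mk, ty_mk' hbb']

section Mergable3
variable (hG : G.IsPattern) (hb : G.ty b = .bang) (hb' : G.ty b' = .bang)
  (hpred : G.bpred b \ {b} = G.bpred b' \ {b'})
  (hdisj : G.bsucc b ∩ G.bsucc b' = ∅)

include hG hb in
theorem b_selfpred : b ∈ G.bpred b := bpred_iff.mpr (hG.beta_refl b hb)

include hG hb' in
theorem b'_selfpred : b' ∈ G.bpred b' := bpred_iff.mpr (hG.beta_refl b' hb')

include hG hb hb' hdisj in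
theorem not_pred_b'b : b' ∉ G.bpred b := fun h => (not_cross hG hb hb' hdisj).2 (bpred_iff.mp h)

include hG hb hb' hdisj in
theorem not_pred_bb' : b ∉ G.bpred b' := fun h => (not_cross hG hb hb' hdisj).1 (bpred_iff.mp h)

include hG hb hb' hdisj in
theorem eq_of_bpred_quot_b {x y : V} (hx : x ∈ G.bpred b) (hy : y ∈ G.bpred b)
    (h : mergeVRel b b' x y) : x = y := by
  rcases h with rfl | ⟨rfl, h2⟩ | ⟨rfl, h2⟩
  · rfl
  · exact absurd (h2 ▸ hy) (not_pred_b'b hG hb hb' hdisj)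
  · exact absurd hx (not_pred_b'b hG hb hb' hdisj)

include hG hb hb' hdisj in
theorem eq_of_bpred_quot_b' {x y : V} (hx : x ∈ G.bpred b') (hy : y ∈ G.bpred b')
    (h : mergeVRel b b' x y) : x = y := by
  rcases h with rfl | ⟨rfl, h2⟩ | ⟨rfl, h2⟩
  · rfl
  · exact absurd hx (not_pred_bb' hG hb hb' hdisj)
  · exact absurd (h2 ▸ hy) (not_pred_bb' hG hb hb' hdisj)

include hG hb in
theorem betaEdge_of_up_b {e : E} (he : e ∈ G.upEdges b) : e ∈ G.betaEdges :=
  ⟨bang_of_mem_bpred hG.g3 hb he.1, bang_of_mem_bpred hG.g3 hb he.2⟩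

include hG hb' in
theorem betaEdge_of_up_b' {e : E} (he : e ∈ G.upEdges b') : e ∈ G.betaEdges :=
  ⟨bang_of_mem_bpred hG.g3 hb' he.1, bang_of_mem_bpred hG.g3 hb' he.2⟩

include hG hb hb' hdisj in
theorem mergeERel_equiv : Equivalence (G.mergeERel b b') := by
  refine ⟨fun e => Or.inl rfl, ?_, ?_⟩
  · rintro e₁ e₂ (rfl | ⟨h1, h2, h3, h4⟩ | ⟨h1, h2, h3, h4⟩)
    · exact Or.inl rfl
    · exact Or.inr (Or.inr ⟨h2, h1, h3.symm, h4.symm⟩)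
    · exact Or.inr (Or.inl ⟨h2, h1, h3.symm, h4.symm⟩)
  · rintro e₁ e₂ e₃ (rfl | ⟨h1, h2, h3, h4⟩ | ⟨h1, h2, h3, h4⟩) h23
    · exact h23
    · rcases h23 with rfl | ⟨k1, k2, k3, k4⟩ | ⟨k1, k2, k3, k4⟩
      · exact Or.inr (Or.inl ⟨h1, h2, h3, h4⟩)
      · exact Or.inr (Or.inl ⟨h1, k2, h3.trans k3, h4.trans k4⟩)
      · -- e₁, e₃ ∈ upEdges b
        left
        have hs : G.s e₁ = G.s e₃ :=
          eq_of_bpred_quot_b hG hb hb' hdisj h1.1 k2.1 (quotV_eq.mp (h3.trans k3))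
        have ht : G.t e₁ = G.t e₃ :=
          eq_of_bpred_quot_b hG hb hb' hdisj h1.2 k2.2 (quotV_eq.mp (h4.trans k4))
        exact hG.beta_simple e₁ e₃ (betaEdge_of_up_b hG hb h1)
          (betaEdge_of_up_b hG hb k2) hs ht
    · rcases h23 with rfl | ⟨k1, k2, k3, k4⟩ | ⟨k1, k2, k3, k4⟩
      · exact Or.inr (Or.inr ⟨h1, h2, h3, h4⟩)
      · left
        have hs : G.s e₁ = G.s e₃ :=
          eq_of_bpred_quot_b' hG hb hb' hdisj h1.1 k2.1 (quotV_eq.mp (h3.trans k3))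
        have ht : G.t e₁ = G.t e₃ :=
          eq_of_bpred_quot_b' hG hb hb' hdisj h1.2 k2.2 (quotV_eq.mp (h4.trans k4))
        exact hG.beta_simple e₁ e₃ (betaEdge_of_up_b' hG hb' h1)
          (betaEdge_of_up_b' hG hb' k2) hs ht
      · exact Or.inr (Or.inr ⟨h1, k2, h3.trans k3, h4.trans k4⟩)

include hG hb hb' hdisj in
theorem quotE_eq {e f : E} :
    (Quot.mk (G.mergeERel b b') e = Quot.mk (G.mergeERel b b') f) ↔ G.mergeERel b b' e f := by
  rw [Quot.eq]
  exact (mergeERel_equiv hG hb hb' hdisj).eqvGen_iff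

end Mergable3

theorem open_in_aux (hG : G.IsPattern) {c v : V} {e : E} (hc : G.ty c = .bang)
    (hv : G.ty v = .wire) (hvc : v ∉ G.bsucc c) (het : G.t e = v)
    (hes : G.s e ∈ G.bsucc c) (hne : G.ty (G.s e) ≠ .bang) : False := by
  have htw : G.ty (G.t e) ≠ .bang := by rw [het, hv]; simp
  have hinp : ((Sub.top G).minus (G.bbox c)).IsInput v := by
    refine ⟨⟨trivial, hvc⟩, hv, ?_⟩
    intro e' he' ht'
    by_contra h'
    have h'' : G.ty (G.t e') ≠ .bang := by rw [ht', hv]; simp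
    have := (hG.sigmaString.2 v hv).1 e e' ⟨hne, htw⟩ ⟨h', h''⟩ het ht'
    exact he'.2.1 (this ▸ hes)
  have := ((hG.box_open c hc).1 v hinp).2.2 e trivial het
  exact hne this

theorem open_out_aux (hG : G.IsPattern) {c v : V} {e : E} (hc : G.ty c = .bang)
    (hv : G.ty v = .wire) (hvc : v ∉ G.bsucc c) (hes : G.s e = v)
    (het : G.t e ∈ G.bsucc c) : False := by
  have hsw : G.ty (G.s e) ≠ .bang := by rw [hes, hv]; simp
  have htw : G.ty (G.t e) ≠ .bang := fun hh => hsw (hG.g3.2 e hh)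
  have houtp : ((Sub.top G).minus (G.bbox c)).IsOutput v := by
    refine ⟨⟨trivial, hvc⟩, hv, ?_⟩
    intro e' he' hs'
    have hsw' : G.ty (G.s e') ≠ .bang := by rw [hs', hv]; simp
    have htw' : G.ty (G.t e') ≠ .bang := fun hh => hsw' (hG.g3.2 e' hh)
    have := (hG.sigmaString.2 v hv).2 e e' ⟨hsw, htw⟩ ⟨hsw', htw'⟩ hes hs'
    exact he'.2.2 (this ▸ het)
  have := ((hG.box_open c hc).2 v houtp).2.2 e trivial
  exact this hes

section Mergable4
variable (hG : G.IsPattern) (hb : G.ty b = .bang) (hb' : G.ty b' = .bang)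
  (hpred : G.bpred b \ {b} = G.bpred b' \ {b'})
  (hdisj : G.bsucc b ∩ G.bsucc b' = ∅)

include hb hb' in
theorem mset_sub {c v : V} (hc : G.ty c = .bang) (hv : v ∈ G.mset b b' c) :
    ∃ c₀, G.ty c₀ = .bang ∧ v ∈ G.bsucc c₀ ∧ G.bsucc c₀ ⊆ G.mset b b' c := by
  classical
  unfold mset at hv ⊢
  by_cases h : c = b ∨ c = b'
  · rw [if_pos h] at hv ⊢
    rcases hv with hv | hv
    · exact ⟨b, hb, hv, Set.subset_union_left⟩
    · exact ⟨b', hb', hv, Set.subset_union_right⟩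
  · rw [if_neg h] at hv ⊢
    exact ⟨c, hc, hv, subset_rfl⟩

include hG hb hb' hpred in
theorem mset_mono {c c' : V} (hc : G.ty c = .bang) (hc' : G.ty c' = .bang)
    (h : c' ∈ G.mset b b' c) : G.mset b b' c' ⊆ G.mset b b' c := by
  classical
  unfold mset at h ⊢
  by_cases h1 : c' = b ∨ c' = b'
  · rw [if_pos h1]
    by_cases h2 : c = b ∨ c = b'
    · rw [if_pos h2]
    · rw [if_neg h2] at h ⊢
      push_neg at h2
      have hbb : b ∈ G.bsucc c ∧ b' ∈ G.bsucc c := by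
        rcases h1 with rfl | rfl
        · exact ⟨h, (succ_b_iff hpred h2.1 h2.2).mp h⟩
        · exact ⟨(succ_b_iff hpred h2.1 h2.2).mpr h, h⟩
      exact Set.union_subset (hG.nest c b hc hb hbb.1) (hG.nest c b' hc hb' hbb.2)
  · rw [if_neg h1]
    by_cases h2 : c = b ∨ c = b'
    · rw [if_pos h2] at h ⊢
      rcases h with h | h
      · exact (hG.nest b c' hb hc' h).trans Set.subset_union_left
      · exact (hG.nest b' c' hb' hc' h).trans Set.subset_union_right
    · rw [if_neg h2] at h ⊢
      exact hG.nest c c' hc hc' h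

include hG hb hb' hpred hdisj in
theorem mset_antisymm {c c' : V} (hc : G.ty c = .bang) (hc' : G.ty c' = .bang)
    (h1 : c' ∈ G.mset b b' c) (h2 : c ∈ G.mset b b' c') :
    Quot.mk (mergeVRel b b') c = Quot.mk (mergeVRel b b') c' := by
  classical
  unfold mset at h1 h2
  by_cases k1 : c = b ∨ c = b'
  · by_cases k2 : c' = b ∨ c' = b'
    · rw [quotV_eq]
      rcases k1 with rfl | rfl <;> rcases k2 with h | h <;> rw [h]
      · exact Or.inl rfl
      · exact Or.inr (Or.inl ⟨rfl, rfl⟩)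
      · exact Or.inr (Or.inr ⟨rfl, rfl⟩)
      · exact Or.inl rfl
    · -- c ∈ {b,b'}, c' ∉
      rw [if_pos k1] at h1
      rw [if_neg k2] at h2
      push_neg at k2
      exfalso
      have hboth : b ∈ G.bsucc c' ∧ b' ∈ G.bsucc c' := by
        rcases k1 with rfl | rfl
        · exact ⟨h2, (succ_b_iff hpred k2.1 k2.2).mp h2⟩
        · exact ⟨(succ_b_iff hpred k2.1 k2.2).mpr h2, h2⟩
      rcases h1 with h1 | h1
      · exact k2.1 (hG.beta_antisymm b c' hb hc' h1 hboth.1).symm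
      · exact k2.2 (hG.beta_antisymm b' c' hb' hc' h1 hboth.2).symm
  · by_cases k2 : c' = b ∨ c' = b'
    · rw [if_neg k1] at h1
      rw [if_pos k2] at h2
      push_neg at k1
      exfalso
      have hboth : b ∈ G.bsucc c ∧ b' ∈ G.bsucc c := by
        rcases k2 with rfl | rfl
        · exact ⟨h1, (succ_b_iff hpred k1.1 k1.2).mp h1⟩
        · exact ⟨(succ_b_iff hpred k1.1 k1.2).mpr h1, h1⟩
      rcases h2 with h2 | h2
      · exact k1.1 (hG.beta_antisymm b c hb hc h2 hboth.1).symm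
      · exact k1.2 (hG.beta_antisymm b' c hb' hc h2 hboth.2).symm
    · rw [if_neg k1] at h1
      rw [if_neg k2] at h2
      rw [hG.beta_antisymm c c' hc hc' h1 h2]

end Mergable4

end MergeLemmas2

section MergePattern
variable {V E : Type} {G : TGraph V E} {b b' : V}
variable (hG : G.IsPattern) (hb : G.ty b = .bang) (hb' : G.ty b' = .bang)
  (hpred : G.bpred b \ {b} = G.bpred b' \ {b'})
  (hdisj : G.bsucc b ∩ G.bsucc b' = ∅)

include hG hb hb' hpred hdisj in
theorem merge_isPattern : (G.mergeGraph b b').IsPattern := by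
  have hbb' : G.ty b = G.ty b' := hb.trans hb'.symm
  have hnn : (G.mergeGraph b b').NoNodeNode := by
    intro q hq
    obtain ⟨e, rfl⟩ := q.exists_rep
    rw [mergeGraph_s_mk, mergeGraph_t_mk, ty_mk' hbb', ty_mk' hbb'] at hq
    exact hG.g3.1 e hq
  refine ⟨⟨hnn, ?_⟩, ⟨hnn, ?_⟩, ⟨?_, ?_, ?_, ?_⟩, ?_, ?_⟩
  · -- G3 bang condition
    intro q hq
    obtain ⟨e, rfl⟩ := q.exists_rep
    rw [mergeGraph_t_mk, ty_mk' hbb'] at hq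
    rw [mergeGraph_s_mk, ty_mk' hbb']
    exact hG.g3.2 e hq
  · -- sigma string
    intro q hq
    obtain ⟨v, rfl⟩ := q.exists_rep
    rw [ty_mk' hbb'] at hq
    have hvnb : G.ty v ≠ .bang := by rw [hq]; simp
    constructor
    · intro q₁ q₂ h₁ h₂ ht₁ ht₂
      obtain ⟨e₁, rfl⟩ := q₁.exists_rep
      obtain ⟨e₂, rfl⟩ := q₂.exists_rep
      rw [merge_sigmaEdge_iff hbb'] at h₁ h₂
      rw [mergeGraph_t_mk] at ht₁ ht₂
      have ht₁' := mergeVRel_eq_right hb hb' hvnb (quotV_eq.mp ht₁)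
      have ht₂' := mergeVRel_eq_right hb hb' hvnb (quotV_eq.mp ht₂)
      rw [(hG.sigmaString.2 v hq).1 e₁ e₂ h₁ h₂ ht₁' ht₂']
    · intro q₁ q₂ h₁ h₂ hs₁ hs₂
      obtain ⟨e₁, rfl⟩ := q₁.exists_rep
      obtain ⟨e₂, rfl⟩ := q₂.exists_rep
      rw [merge_sigmaEdge_iff hbb'] at h₁ h₂
      rw [mergeGraph_s_mk] at hs₁ hs₂
      have hs₁' := mergeVRel_eq_right hb hb' hvnb (quotV_eq.mp hs₁)
      have hs₂' := mergeVRel_eq_right hb hb' hvnb (quotV_eq.mp hs₂)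
      rw [(hG.sigmaString.2 v hq).2 e₁ e₂ h₁ h₂ hs₁' hs₂']
  · -- beta simple
    intro q₁ q₂ h₁ h₂ hs ht
    obtain ⟨e₁, rfl⟩ := q₁.exists_rep
    obtain ⟨e₂, rfl⟩ := q₂.exists_rep
    rw [merge_betaEdge_iff hbb'] at h₁ h₂
    rw [mergeGraph_s_mk] at hs
    rw [mergeGraph_t_mk] at ht
    rcases quotV_eq.mp hs with hss | ⟨hs1, hs2⟩ | ⟨hs1, hs2⟩
    · rcases quotV_eq.mp ht with htt | ⟨ht1, ht2⟩ | ⟨ht1, ht2⟩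
      · exact congrArg _ (hG.beta_simple e₁ e₂ h₁ h₂ hss htt)
      · -- t e₁ = b, t e₂ = b'
        by_cases hxb : G.s e₁ = b
        · exact absurd ⟨e₂, by rw [← hss, hxb], ht2⟩ (not_cross hG hb hb' hdisj).1
        by_cases hxb' : G.s e₁ = b'
        · exact absurd ⟨e₁, hxb', ht1⟩ (not_cross hG hb hb' hdisj).2
        · refine Quot.sound (Or.inr (Or.inl ⟨⟨⟨e₁, rfl, ht1⟩, ?_⟩, ⟨?_, ?_⟩, hs, ht⟩))
          · rw [ht1]; exact b_selfpred hG hb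
          · have : G.s e₁ ∈ G.bpred b' := mem_bpred_both hpred ⟨e₁, rfl, ht1⟩ hxb
            rwa [hss] at this
          · rw [ht2]; exact b'_selfpred hG hb'
      · -- t e₁ = b', t e₂ = b
        by_cases hxb' : G.s e₁ = b'
        · exact absurd ⟨e₂, by rw [← hss, hxb'], ht2⟩ (not_cross hG hb hb' hdisj).2
        by_cases hxb : G.s e₁ = b
        · exact absurd ⟨e₁, hxb, ht1⟩ (not_cross hG hb hb' hdisj).1
        · refine Quot.sound (Or.inr (Or.inr ⟨⟨⟨e₁, rfl, ht1⟩, ?_⟩, ⟨?_, ?_⟩, hs, ht⟩))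
          · rw [ht1]; exact b'_selfpred hG hb'
          · have : G.s e₁ ∈ G.bpred b := mem_bpred_both' hpred ⟨e₁, rfl, ht1⟩ hxb'
            rwa [hss] at this
          · rw [ht2]; exact b_selfpred hG hb
    · -- s e₁ = b, s e₂ = b'
      rcases quotV_eq.mp ht with htt | ⟨ht1, ht2⟩ | ⟨ht1, ht2⟩
      · exfalso
        have : G.t e₁ ∈ G.bsucc b ∩ G.bsucc b' := ⟨⟨e₁, hs1, rfl⟩, ⟨e₂, hs2, htt.symm⟩⟩
        rw [hdisj] at this
        exact this
      · refine Quot.sound (Or.inr (Or.inl ⟨⟨?_, ?_⟩, ⟨?_, ?_⟩, hs, ht⟩))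
        · rw [hs1]; exact b_selfpred hG hb
        · rw [ht1]; exact b_selfpred hG hb
        · rw [hs2]; exact b'_selfpred hG hb'
        · rw [ht2]; exact b'_selfpred hG hb'
      · exact absurd ⟨e₁, hs1, ht1⟩ (not_cross hG hb hb' hdisj).1
    · -- s e₁ = b', s e₂ = b
      rcases quotV_eq.mp ht with htt | ⟨ht1, ht2⟩ | ⟨ht1, ht2⟩
      · exfalso
        have : G.t e₁ ∈ G.bsucc b ∩ G.bsucc b' := ⟨⟨e₂, hs2, htt.symm⟩, ⟨e₁, hs1, rfl⟩⟩
        rw [hdisj] at this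
        exact this
      · exact absurd ⟨e₁, hs1, ht1⟩ (not_cross hG hb hb' hdisj).2
      · refine Quot.sound (Or.inr (Or.inr ⟨⟨?_, ?_⟩, ⟨?_, ?_⟩, hs, ht⟩))
        · rw [hs1]; exact b'_selfpred hG hb'
        · rw [ht1]; exact b'_selfpred hG hb'
        · rw [hs2]; exact b_selfpred hG hb
        · rw [ht2]; exact b_selfpred hG hb
  · -- refl
    intro q hq
    obtain ⟨c, rfl⟩ := q.exists_rep
    rw [ty_mk' hbb'] at hq
    obtain ⟨e, hse, hte⟩ := hG.beta_refl c hq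
    exact ⟨Quot.mk _ e, by rw [mergeGraph_s_mk, hse], by rw [mergeGraph_t_mk, hte]⟩
  · -- antisymm
    intro q₁ q₂ h₁ h₂ hm₁ hm₂
    obtain ⟨c, rfl⟩ := q₁.exists_rep
    obtain ⟨c', rfl⟩ := q₂.exists_rep
    rw [ty_mk' hbb'] at h₁ h₂
    rw [mem_merge_bsucc hG hb hb' hpred] at hm₁ hm₂
    exact mset_antisymm hG hb hb' hpred hdisj h₁ h₂ hm₁ hm₂
  · -- trans
    intro q₁ q₂ q₃ h₁ h₂ h₃ hm₁ hm₂
    obtain ⟨a, rfl⟩ := q₁.exists_rep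
    obtain ⟨c, rfl⟩ := q₂.exists_rep
    obtain ⟨d, rfl⟩ := q₃.exists_rep
    rw [ty_mk' hbb'] at h₁ h₂
    rw [mem_merge_bsucc hG hb hb' hpred] at hm₁ hm₂ ⊢
    exact mset_mono hG hb hb' hpred h₁ h₂ hm₁ hm₂
  · -- box open
    intro q hq
    obtain ⟨c, rfl⟩ := q.exists_rep
    rw [ty_mk' hbb'] at hq
    constructor
    · intro q' hq'
      obtain ⟨v, rfl⟩ := q'.exists_rep
      obtain ⟨hvmem, hvty, hmin⟩ := hq'
      rw [ty_mk' hbb'] at hvty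
      have hvS : v ∉ G.mset b b' c := fun hc' =>
        hvmem.2 ((mem_merge_bsucc hG hb hb' hpred c v).mpr hc')
      refine ⟨trivial, by rw [ty_mk' hbb']; exact hvty, ?_⟩
      intro q₁ _ hq₁t
      obtain ⟨e, rfl⟩ := q₁.exists_rep
      rw [mergeGraph_t_mk] at hq₁t
      have hte : G.t e = v := mergeVRel_eq_right hb hb'
        (by rw [hvty]; simp) (quotV_eq.mp hq₁t)
      rw [mergeGraph_s_mk, ty_mk' hbb']
      by_contra hne
      by_cases hsm : G.s e ∈ G.mset b b' c
      · obtain ⟨c₀, hc₀ty, hmem, hsub⟩ := mset_sub hb hb' hq hsm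
        exact open_in_aux hG hc₀ty hvty (fun hh => hvS (hsub hh)) hte hmem hne
      · have hmm := hmin (Quot.mk _ e) ⟨trivial,
          fun hcc => hsm ((mem_merge_bsucc hG hb hb' hpred c (G.s e)).mp hcc),
          fun hcc => hvS ((mem_merge_bsucc hG hb hb' hpred c v).mp
            (hq₁t ▸ hcc))⟩ (by rw [mergeGraph_t_mk]; exact hq₁t)
        rw [mergeGraph_s_mk, ty_mk' hbb'] at hmm
        exact hne hmm
    · intro q' hq'
      obtain ⟨v, rfl⟩ := q'.exists_rep
      obtain ⟨hvmem, hvty, hmin⟩ := hq'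
      rw [ty_mk' hbb'] at hvty
      have hvS : v ∉ G.mset b b' c := fun hc' =>
        hvmem.2 ((mem_merge_bsucc hG hb hb' hpred c v).mpr hc')
      refine ⟨trivial, by rw [ty_mk' hbb']; exact hvty, ?_⟩
      intro q₁ _ hcon
      obtain ⟨e, rfl⟩ := q₁.exists_rep
      rw [mergeGraph_s_mk] at hcon
      have hse : G.s e = v := mergeVRel_eq_right hb hb'
        (by rw [hvty]; simp) (quotV_eq.mp hcon)
      by_cases htm : G.t e ∈ G.mset b b' c
      · obtain ⟨c₀, hc₀ty, hmem, hsub⟩ := mset_sub hb hb' hq htm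
        exact open_out_aux hG hc₀ty hvty (fun hh => hvS (hsub hh)) hse hmem
      · refine hmin (Quot.mk _ e) ⟨trivial,
          fun hcc => hvS ((mem_merge_bsucc hG hb hb' hpred c v).mp
            (hse ▸ hcc)), ?_⟩
          (by rw [mergeGraph_s_mk, hse])
        intro hcc
        rw [mergeGraph_t_mk] at hcc
        exact htm ((mem_merge_bsucc hG hb hb' hpred c (G.t e)).mp hcc)
  · -- nesting
    intro q₁ q₂ h₁ h₂ hm
    obtain ⟨c, rfl⟩ := q₁.exists_rep
    obtain ⟨c', rfl⟩ := q₂.exists_rep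
    rw [ty_mk' hbb'] at h₁ h₂
    rw [mem_merge_bsucc hG hb hb' hpred] at hm
    intro q hqm
    obtain ⟨v, rfl⟩ := q.exists_rep
    rw [mem_merge_bsucc hG hb hb' hpred] at hqm ⊢
    exact mset_mono hG hb hb' hpred h₁ h₂ hm hqm

end MergePattern

section MergeTransfer
variable {V E : Type} {G : TGraph V E} {b b' : V}

theorem merge_isInput_iff (hb : G.ty b = .bang) (hb' : G.ty b' = .bang) (v : V) :
    (G.mergeGraph b b').IsInput (Quot.mk _ v) ↔ G.IsInput v := by
  have hbb' := hb.trans hb'.symm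
  unfold IsInput
  rw [ty_mk' hbb']
  constructor
  · rintro ⟨h1, h2⟩
    refine ⟨h1, fun e hte => ?_⟩
    have := h2 (Quot.mk _ e) (by rw [mergeGraph_t_mk, hte])
    rwa [mergeGraph_s_mk, ty_mk' hbb'] at this
  · rintro ⟨h1, h2⟩
    refine ⟨h1, ?_⟩
    intro q hq
    obtain ⟨e, rfl⟩ := q.exists_rep
    rw [mergeGraph_t_mk] at hq
    have hte := mergeVRel_eq_right hb hb' (by rw [h1]; simp) (quotV_eq.mp hq)
    rw [mergeGraph_s_mk, ty_mk' hbb']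
    exact h2 e hte

theorem merge_isOutput_iff (hb : G.ty b = .bang) (hb' : G.ty b' = .bang) (v : V) :
    (G.mergeGraph b b').IsOutput (Quot.mk _ v) ↔ G.IsOutput v := by
  have hbb' := hb.trans hb'.symm
  unfold IsOutput
  rw [ty_mk' hbb']
  constructor
  · rintro ⟨h1, h2⟩
    refine ⟨h1, fun e hse => ?_⟩
    exact h2 (Quot.mk _ e) (by rw [mergeGraph_s_mk, hse])
  · rintro ⟨h1, h2⟩
    refine ⟨h1, ?_⟩
    intro q hq
    obtain ⟨e, rfl⟩ := q.exists_rep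
    rw [mergeGraph_s_mk] at hq
    exact h2 e (mergeVRel_eq_right hb hb' (by rw [h1]; simp) (quotV_eq.mp hq))

theorem quotV_transfer {V' : Type} {f : V → V'} {b b' x y : V}
    (hinjb : ∀ v, f v = f b → v = b) (hinjb' : ∀ v, f v = f b' → v = b')
    (hinjxy : f x = f y → x = y)
    (h : Quot.mk (mergeVRel (f b) (f b')) (f x) = Quot.mk (mergeVRel (f b) (f b')) (f y)) :
    Quot.mk (mergeVRel b b') x = Quot.mk (mergeVRel b b') y := by
  rw [quotV_eq] at h ⊢
  rcases h with h | ⟨h1, h2⟩ | ⟨h1, h2⟩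
  · exact Or.inl (hinjxy h)
  · exact Or.inr (Or.inl ⟨hinjb x h1, hinjb' y h2⟩)
  · exact Or.inr (Or.inr ⟨hinjb' x h1, hinjb y h2⟩)

end MergeTransfer

section MergeSide
variable {VI EI VL EL : Type} {I : TGraph VI EI} {L : TGraph VL EL}
  {f : GHom I L} {b b' : VI}
variable (hIp : I.IsPattern) (hLp : L.IsPattern)
  (hb : I.ty b = .bang) (hb' : I.ty b' = .bang)
  (hpredI : I.bpred b \ {b} = I.bpred b' \ {b'})
  (hpredL : L.bpred (f.fv b) \ {f.fv b} = L.bpred (f.fv b') \ {f.fv b'})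
  (hdisjL : L.bsucc (f.fv b) ∩ L.bsucc (f.fv b') = ∅)
  (hinjb : ∀ v, f.fv v = f.fv b → v = b)
  (hinjb' : ∀ v, f.fv v = f.fv b' → v = b')
  (hbox : ∀ c, I.ty c = .bang → f.fv ⁻¹' (L.bsucc (f.fv c)) = I.bsucc c)
  (hbetaV : Set.BijOn f.fv {v | I.ty v = .bang} {v | L.ty v = .bang})
  (hbetaE : Set.BijOn f.fe I.betaEdges L.betaEdges)

section
variable (hbL : L.ty (f.fv b) = .bang) (hb'L : L.ty (f.fv b') = .bang)

include hb hb' hbL hb'L hinjb hinjb' hbetaV in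
theorem merge_beta_bijV :
    Set.BijOn (mergeVMap f b b') {q | (I.mergeGraph b b').ty q = .bang}
      {q | (L.mergeGraph (f.fv b) (f.fv b')).ty q = .bang} := by
  have hbbI := hb.trans hb'.symm
  have hbbL := hbL.trans hb'L.symm
  refine ⟨?_, ?_, ?_⟩
  · intro q hq
    obtain ⟨v, rfl⟩ := q.exists_rep
    rw [Set.mem_setOf_eq, ty_mk' hbbI] at hq
    rw [Set.mem_setOf_eq, mergeVMap_mk, ty_mk' hbbL]
    exact hbetaV.mapsTo hq
  · intro q₁ hq₁ q₂ hq₂ heq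
    obtain ⟨v₁, rfl⟩ := q₁.exists_rep
    obtain ⟨v₂, rfl⟩ := q₂.exists_rep
    rw [Set.mem_setOf_eq, ty_mk' hbbI] at hq₁ hq₂
    rw [mergeVMap_mk, mergeVMap_mk] at heq
    exact quotV_transfer hinjb hinjb' (fun hh => hbetaV.injOn hq₁ hq₂ hh) heq
  · intro q hq
    obtain ⟨w, rfl⟩ := q.exists_rep
    rw [Set.mem_setOf_eq, ty_mk' hbbL] at hq
    obtain ⟨v, hv, hvw⟩ := hbetaV.surjOn hq
    exact ⟨Quot.mk _ v, by rw [Set.mem_setOf_eq, ty_mk' hbbI]; exact hv,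
      by rw [mergeVMap_mk, hvw]⟩

include hIp hLp hb hb' hbL hb'L hpredI hdisjL hinjb hinjb' hbox hbetaV hbetaE in
theorem merge_beta_bijE (hdisjI : I.bsucc b ∩ I.bsucc b' = ∅) :
    Set.BijOn (mergeEMap f b b') (I.mergeGraph b b').betaEdges
      (L.mergeGraph (f.fv b) (f.fv b')).betaEdges := by
  have hbbI := hb.trans hb'.symm
  have hbbL := hbL.trans hb'L.symm
  have hreflect : ∀ {x c : VI}, I.ty c = .bang → f.fv x ∈ L.bpred (f.fv c) →
      x ∈ I.bpred c ∧ I.ty x = .bang := by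
    intro x c hc hx
    have hty : I.ty x = .bang := by
      have := bang_of_mem_bpred hLp.g3 (by rw [f.map_ty, hc]) hx
      rwa [f.map_ty] at this
    refine ⟨?_, hty⟩
    have : x ∈ f.fv ⁻¹' (L.bsucc (f.fv x)) → x ∈ I.bsucc x := by
      rw [hbox x hty]; exact id
    exact bpred_iff.mpr (mem_of_preimage_eq f.fv (hbox x hty) (bpred_iff.mp hx))
  refine ⟨?_, ?_, ?_⟩
  · intro q hq
    obtain ⟨e, rfl⟩ := q.exists_rep
    rw [merge_betaEdge_iff hbbI] at hq
    rw [mergeEMap_mk, merge_betaEdge_iff hbbL]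
    exact hbetaE.mapsTo hq
  · intro q₁ hq₁ q₂ hq₂ heq
    obtain ⟨e₁, rfl⟩ := q₁.exists_rep
    obtain ⟨e₂, rfl⟩ := q₂.exists_rep
    rw [merge_betaEdge_iff hbbI] at hq₁ hq₂
    rw [mergeEMap_mk, mergeEMap_mk] at heq
    have hrel := (quotE_eq hLp hbL hb'L hdisjL).mp heq
    rcases hrel with hrel | ⟨u1, u2, u3, u4⟩ | ⟨u1, u2, u3, u4⟩
    · exact congrArg _ (hbetaE.injOn hq₁ hq₂ hrel)
    · rw [f.map_s, f.map_s] at u3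
      rw [f.map_t, f.map_t] at u4
      have a1 := hreflect hb (f.map_s e₁ ▸ u1.1)
      have a2 := hreflect hb (f.map_t e₁ ▸ u1.2)
      have a3 := hreflect hb' (f.map_s e₂ ▸ u2.1)
      have a4 := hreflect hb' (f.map_t e₂ ▸ u2.2)
      refine Quot.sound (Or.inr (Or.inl ⟨⟨a1.1, a2.1⟩, ⟨a3.1, a4.1⟩, ?_, ?_⟩))
      · exact quotV_transfer hinjb hinjb'
          (fun hh => hbetaV.injOn a1.2 a3.2 hh) u3
      · exact quotV_transfer hinjb hinjb'
          (fun hh => hbetaV.injOn a2.2 a4.2 hh) u4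
    · rw [f.map_s, f.map_s] at u3
      rw [f.map_t, f.map_t] at u4
      have a1 := hreflect hb' (f.map_s e₁ ▸ u1.1)
      have a2 := hreflect hb' (f.map_t e₁ ▸ u1.2)
      have a3 := hreflect hb (f.map_s e₂ ▸ u2.1)
      have a4 := hreflect hb (f.map_t e₂ ▸ u2.2)
      refine Quot.sound (Or.inr (Or.inr ⟨⟨a1.1, a2.1⟩, ⟨a3.1, a4.1⟩, ?_, ?_⟩))
      · exact quotV_transfer hinjb hinjb'
          (fun hh => hbetaV.injOn a1.2 a3.2 hh) u3
      · exact quotV_transfer hinjb hinjb'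
          (fun hh => hbetaV.injOn a2.2 a4.2 hh) u4
  · intro q hq
    obtain ⟨g, rfl⟩ := q.exists_rep
    rw [merge_betaEdge_iff hbbL] at hq
    obtain ⟨e, he, heg⟩ := hbetaE.surjOn hq
    exact ⟨Quot.mk _ e, (merge_betaEdge_iff hbbI e).mpr he,
      by rw [mergeEMap_mk, heg]⟩

include hIp hLp hb hb' hbL hb'L hpredI hpredL hinjb hinjb' hbox in
theorem merge_box (q : Quot (mergeVRel b b'))
    (hq : (I.mergeGraph b b').ty q = .bang) :
    mergeVMap f b b' ⁻¹'
        ((L.mergeGraph (f.fv b) (f.fv b')).bsucc (mergeVMap f b b' q)) =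
      (I.mergeGraph b b').bsucc q := by
  have hbbI := hb.trans hb'.symm
  obtain ⟨c, rfl⟩ := q.exists_rep
  rw [ty_mk' hbbI] at hq
  apply Set.ext
  intro p
  obtain ⟨v, rfl⟩ := p.exists_rep
  rw [Set.mem_preimage, mergeVMap_mk, mergeVMap_mk,
    mem_merge_bsucc hLp hbL hb'L hpredL,
    mem_merge_bsucc hIp hb hb' hpredI]
  classical
  unfold mset
  by_cases hcb : c = b ∨ c = b'
  · have hfcb : f.fv c = f.fv b ∨ f.fv c = f.fv b' := by
      rcases hcb with rfl | rfl
      · exact Or.inl rfl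
      · exact Or.inr rfl
    rw [if_pos hcb, if_pos hfcb]
    constructor
    · rintro (hh | hh)
      · exact Or.inl (mem_of_preimage_eq f.fv (hbox b hb) hh)
      · exact Or.inr (mem_of_preimage_eq f.fv (hbox b' hb') hh)
    · rintro (hh | hh)
      · exact Or.inl (f.mem_bsucc hh)
      · exact Or.inr (f.mem_bsucc hh)
  · have hfcb : ¬(f.fv c = f.fv b ∨ f.fv c = f.fv b') := by
      rintro (hh | hh)
      · exact hcb (Or.inl (hinjb c hh))
      · exact hcb (Or.inr (hinjb' c hh))
    rw [if_neg hcb, if_neg hfcb]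
    constructor
    · exact fun hh => mem_of_preimage_eq f.fv (hbox c hq) hh
    · exact fun hh => f.mem_bsucc hh

end
end MergeSide

section MergeBound
variable {VI EI VL EL : Type} {I : TGraph VI EI} {L : TGraph VL EL}
  {f : GHom I L} {b b' : VI}
  (hb : I.ty b = .bang) (hb' : I.ty b' = .bang)
  (hbL : L.ty (f.fv b) = .bang) (hb'L : L.ty (f.fv b') = .bang)
  (hinjb : ∀ v, f.fv v = f.fv b → v = b)
  (hinjb' : ∀ v, f.fv v = f.fv b' → v = b')

include hb hb' hbL hb'L hinjb hinjb' in
theorem merge_bound_bij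
    (hbound : Set.BijOn f.fv {v | I.ty v = .wire} {v | L.IsInput v ∨ L.IsOutput v}) :
    Set.BijOn (mergeVMap f b b') {q | (I.mergeGraph b b').ty q = .wire}
      {q | (L.mergeGraph (f.fv b) (f.fv b')).IsInput q ∨
        (L.mergeGraph (f.fv b) (f.fv b')).IsOutput q} := by
  have hbbI := hb.trans hb'.symm
  refine ⟨?_, ?_, ?_⟩
  · intro q hq
    obtain ⟨v, rfl⟩ := q.exists_rep
    rw [Set.mem_setOf_eq, ty_mk' hbbI] at hq
    rw [Set.mem_setOf_eq, mergeVMap_mk]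
    rcases hbound.mapsTo hq with hh | hh
    · exact Or.inl ((merge_isInput_iff hbL hb'L (f.fv v)).mpr hh)
    · exact Or.inr ((merge_isOutput_iff hbL hb'L (f.fv v)).mpr hh)
  · intro q₁ hq₁ q₂ hq₂ heq
    obtain ⟨v₁, rfl⟩ := q₁.exists_rep
    obtain ⟨v₂, rfl⟩ := q₂.exists_rep
    rw [Set.mem_setOf_eq, ty_mk' hbbI] at hq₁ hq₂
    rw [mergeVMap_mk, mergeVMap_mk] at heq
    exact quotV_transfer hinjb hinjb' (fun hh => hbound.injOn hq₁ hq₂ hh) heq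
  · intro q hq
    obtain ⟨w, rfl⟩ := q.exists_rep
    have hw : L.IsInput w ∨ L.IsOutput w := by
      rcases hq with hh | hh
      · exact Or.inl ((merge_isInput_iff hbL hb'L w).mp hh)
      · exact Or.inr ((merge_isOutput_iff hbL hb'L w).mp hh)
    obtain ⟨v, hv, hvw⟩ := hbound.surjOn hw
    exact ⟨Quot.mk _ v, by rw [Set.mem_setOf_eq, ty_mk' hbbI]; exact hv,
      by rw [mergeVMap_mk, hvw]⟩

end MergeBound
end TGraph

open TGraph in
/-- If `b, b'` are `!`-vertices of `I` such that `(b,b')`,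
`(i₁(b),i₁(b'))` and `(i₂(b),i₂(b'))` are each mergable, then applying
`PMERGE_{b,b'}` to a rewrite pattern yields a rewrite pattern. -/
theorem statement_16 {VL EL VI EI VR ER : Type}
    {L : TGraph VL EL} {I : TGraph VI EI} {R : TGraph VR ER}
    {i₁ : GHom I L} {i₂ : GHom I R}
    (h : IsRewritePattern L I R i₁ i₂)
    (b b' : VI) (hb : I.ty b = .bang) (hb' : I.ty b' = .bang)
    (hpredI : I.bpred b \ {b} = I.bpred b' \ {b'})
    (hdisjI : I.bsucc b ∩ I.bsucc b' = ∅)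
    (hpredL : L.bpred (i₁.fv b) \ {i₁.fv b} = L.bpred (i₁.fv b') \ {i₁.fv b'})
    (hdisjL : L.bsucc (i₁.fv b) ∩ L.bsucc (i₁.fv b') = ∅)
    (hpredR : R.bpred (i₂.fv b) \ {i₂.fv b} = R.bpred (i₂.fv b') \ {i₂.fv b'})
    (hdisjR : R.bsucc (i₂.fv b) ∩ R.bsucc (i₂.fv b') = ∅) :
    IsRewritePattern (L.mergeGraph (i₁.fv b) (i₁.fv b'))
      (I.mergeGraph b b') (R.mergeGraph (i₂.fv b) (i₂.fv b'))
      (mergeHom i₁ b b' (h.inj₁ hb')) (mergeHom i₂ b b' (h.inj₂ hb')) := by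
  have hbL : L.ty (i₁.fv b) = .bang := (i₁.map_ty b).trans hb
  have hb'L : L.ty (i₁.fv b') = .bang := (i₁.map_ty b').trans hb'
  have hbR : R.ty (i₂.fv b) = .bang := (i₂.map_ty b).trans hb
  have hb'R : R.ty (i₂.fv b') = .bang := (i₂.map_ty b').trans hb'
  have hbbI : I.ty b = I.ty b' := hb.trans hb'.symm
  refine
    { patL := merge_isPattern h.patL hbL hb'L hpredL hdisjL
      patI := merge_isPattern h.patI hb hb' hpredI hdisjI
      patR := merge_isPattern h.patR hbR hb'R hpredR hdisjR
      no_node := ?_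
      no_sigma_edges := ?_
      bound_bij₁ := merge_bound_bij (hb := hb) (hb' := hb') (hbL := hbL)
        (hb'L := hb'L) (hinjb := h.inj₁ hb) (hinjb' := h.inj₁ hb') h.bound_bij₁
      bound_bij₂ := merge_bound_bij (hb := hb) (hb' := hb') (hbL := hbR)
        (hb'L := hb'R) (hinjb := h.inj₂ hb) (hinjb' := h.inj₂ hb') h.bound_bij₂
      inout := ?_
      beta_bijV₁ := merge_beta_bijV (hb := hb) (hb' := hb') (hinjb := h.inj₁ hb)
        (hinjb' := h.inj₁ hb') (hbetaV := h.beta_bijV₁) (hbL := hbL) (hb'L := hb'L)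
      beta_bijE₁ := merge_beta_bijE (hIp := h.patI) (hLp := h.patL) (hb := hb)
        (hb' := hb') (hpredI := hpredI) (hdisjL := hdisjL) (hinjb := h.inj₁ hb)
        (hinjb' := h.inj₁ hb') (hbox := h.box₁) (hbetaV := h.beta_bijV₁)
        (hbetaE := h.beta_bijE₁) (hbL := hbL) (hb'L := hb'L) hdisjI
      beta_bijV₂ := merge_beta_bijV (hb := hb) (hb' := hb') (hinjb := h.inj₂ hb)
        (hinjb' := h.inj₂ hb') (hbetaV := h.beta_bijV₂) (hbL := hbR) (hb'L := hb'R)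
      beta_bijE₂ := merge_beta_bijE (hIp := h.patI) (hLp := h.patR) (hb := hb)
        (hb' := hb') (hpredI := hpredI) (hdisjL := hdisjR) (hinjb := h.inj₂ hb)
        (hinjb' := h.inj₂ hb') (hbox := h.box₂) (hbetaV := h.beta_bijV₂)
        (hbetaE := h.beta_bijE₂) (hbL := hbR) (hb'L := hb'R) hdisjI
      box₁ := merge_box (hIp := h.patI) (hLp := h.patL) (hb := hb) (hb' := hb')
        (hpredI := hpredI) (hpredL := hpredL) (hinjb := h.inj₁ hb)
        (hinjb' := h.inj₁ hb') (hbox := h.box₁) (hbL := hbL) (hb'L := hb'L)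
      box₂ := merge_box (hIp := h.patI) (hLp := h.patR) (hb := hb) (hb' := hb')
        (hpredI := hpredI) (hpredL := hpredR) (hinjb := h.inj₂ hb)
        (hinjb' := h.inj₂ hb') (hbox := h.box₂) (hbL := hbR) (hb'L := hb'R) }
  · intro q
    obtain ⟨v, rfl⟩ := q.exists_rep
    rw [ty_mk' hbbI]
    exact h.no_node v
  · intro q hq
    obtain ⟨e, rfl⟩ := q.exists_rep
    exact h.no_sigma_edges e ((merge_sigmaEdge_iff hbbI e).mp hq)
  · intro q hq
    obtain ⟨v, rfl⟩ := q.exists_rep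
    rw [ty_mk' hbbI] at hq
    have hi := h.inout v hq
    constructor
    · exact (merge_isInput_iff hbL hb'L (i₁.fv v)).trans
        (hi.1.trans (merge_isInput_iff hbR hb'R (i₂.fv v)).symm)
    · exact (merge_isOutput_iff hbL hb'L (i₁.fv v)).trans
        (hi.2.trans (merge_isOutput_iff hbR hb'R (i₂.fv v)).symm)
end
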